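/- arXiv:2312.03407 — 5 statements merged into one kernel-verified Lean document; each statement's English description precedes it below -/
import Mathlib

section
/- Let A be a fitting algorithm for conjunctive queries that, on every input collection of labeled examples for which a strongly most-general fitting CQ exists, outputs a strongly most-general fitting CQ. Then A is not a sample-efficient PAC learning algorithm; that is, there is no polynomial function m witnessing the PAC learning property for A. -/
/-! ## Basic setting: schemas, instances, homomorphisms, conjunctive queries -/

/-- A schema: a type of relation symbols, each with an associated arity. -/
structure Schema where
  Rel : Type
  arity : Rel → ℕ

/-- A fact over a schema `S`: a relation symbol of `S` applied to a tuple of values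
(values are natural numbers) whose length is the arity of the symbol. -/
structure DBFact (S : Schema) where
  rel : S.Rel
  args : List ℕ
  arity_eq : args.length = S.arity rel

/-- A database instance over `S`: a finite set of facts. -/
structure Instance (S : Schema) where
  facts : Set (DBFact S)
  finite : facts.Finite

/-- The active domain of an instance: all values occurring in its facts. -/
def Instance.adom {S : Schema} (I : Instance S) : Set ℕ :=
  { v | ∃ f ∈ I.facts, v ∈ f.args }

/-- The image of a fact under a map on values. -/
def DBFact.map {S : Schema} (h : ℕ → ℕ) (f : DBFact S) : DBFact S :=
  ⟨f.rel, f.args.map h, by simpa using f.arity_eq⟩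

/-- `h` is a homomorphism from `I` to `J`: the image of every fact of `I` is a fact of `J`. -/
def IsHom {S : Schema} (I J : Instance S) (h : ℕ → ℕ) : Prop :=
  ∀ f ∈ I.facts, f.map h ∈ J.facts

/-- A pointed instance: an instance together with a distinguished `k`-tuple of values. -/
abbrev PInst (S : Schema) (k : ℕ) := Instance S × (Fin k → ℕ)

/-- A pointed instance is a (valid) data example if its distinguished tuple lies in the
active domain. -/
def IsExample {S : Schema} {k : ℕ} (e : PInst S k) : Prop :=
  ∀ i, e.2 i ∈ e.1.adom

/-- `(I,a) → (J,b)`: there is a homomorphism from `I` to `J` mapping `a` to `b`. -/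
def PHom {S : Schema} {k : ℕ} (e e' : PInst S k) : Prop :=
  ∃ h : ℕ → ℕ, IsHom e.1 e'.1 h ∧ ∀ i, h (e.2 i) = e'.2 i

/-- A `k`-ary conjunctive query over `S`: a finite set of atoms (facts over variables,
where variables are natural numbers) together with a `k`-tuple of answer variables. -/
structure CQ (S : Schema) (k : ℕ) where
  atoms : Set (DBFact S)
  finite : atoms.Finite
  ans : Fin k → ℕ

/-- `q(I)`: the set of `k`-tuples `a` over the active domain of `I` such that some
assignment of the variables of `q` into `I` maps every atom to a fact of `I`
and the answer variables to `a`. -/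
def CQ.eval {S : Schema} {k : ℕ} (q : CQ S k) (I : Instance S) : Set (Fin k → ℕ) :=
  { a | (∀ i, a i ∈ I.adom) ∧
        ∃ h : ℕ → ℕ, (∀ f ∈ q.atoms, f.map h ∈ I.facts) ∧ ∀ i, h (q.ans i) = a i }

/-- Containment `q₁ ⊆ q₂` : `q₁(I) ⊆ q₂(I)` for all instances `I`. -/
def CQ.contained {S : Schema} {k : ℕ} (q₁ q₂ : CQ S k) : Prop :=
  ∀ I : Instance S, q₁.eval I ⊆ q₂.eval I

/-- Equivalence of CQs: mutual containment. -/
def CQ.equiv {S : Schema} {k : ℕ} (q₁ q₂ : CQ S k) : Prop :=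
  q₁.contained q₂ ∧ q₂.contained q₁

/-- A collection of labeled examples `E = (E⁺, E⁻)`. -/
structure LabeledExamples (S : Schema) (k : ℕ) where
  pos : Set (PInst S k)
  neg : Set (PInst S k)

/-- `q` fits `E`: every element of `E⁺` is a positive example for `q` and every element
of `E⁻` is a negative example for `q`. -/
def CQ.fits {S : Schema} {k : ℕ} (q : CQ S k) (E : LabeledExamples S k) : Prop :=
  (∀ e ∈ E.pos, e.2 ∈ q.eval e.1) ∧ (∀ e ∈ E.neg, e.2 ∉ q.eval e.1)

/-! ## Extremal fitting CQs -/

/-- `q` is a most-specific fitting CQ for `E`. -/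
def IsMostSpecificFit {S : Schema} {k : ℕ} (q : CQ S k) (E : LabeledExamples S k) : Prop :=
  q.fits E ∧ ∀ q' : CQ S k, q'.fits E → q.contained q'

/-- `q` is a strongly most-general fitting CQ for `E`. -/
def IsStronglyMostGeneralFit {S : Schema} {k : ℕ} (q : CQ S k) (E : LabeledExamples S k) : Prop :=
  q.fits E ∧ ∀ q' : CQ S k, q'.fits E → q'.contained q

/-- `q` is a weakly most-general fitting CQ for `E`. -/
def IsWeaklyMostGeneralFit {S : Schema} {k : ℕ} (q : CQ S k) (E : LabeledExamples S k) : Prop :=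
  q.fits E ∧ ∀ q' : CQ S k, q'.fits E → q.contained q' → q.equiv q'

/-- `B` is a (finite) basis of most-general fitting CQs for `E`. -/
def IsBasisOfMostGeneralFits {S : Schema} {k : ℕ} (B : Set (CQ S k))
    (E : LabeledExamples S k) : Prop :=
  B.Finite ∧ (∀ q ∈ B, q.fits E) ∧ ∀ q' : CQ S k, q'.fits E → ∃ q ∈ B, q'.contained q

/-! ## Canonical examples and relativized homomorphism dualities -/

/-- The canonical example `e_q` of a CQ `q`: its atoms as facts, pointed at the
answer variables. -/
def CQ.canonEx {S : Schema} {k : ℕ} (q : CQ S k) : PInst S k :=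
  (⟨q.atoms, q.finite⟩, q.ans)

/-- The canonical CQ of a pointed instance. -/
def canonCQ {S : Schema} {k : ℕ} (e : PInst S k) : CQ S k :=
  ⟨e.1.facts, e.1.finite, e.2⟩

/-- `(F, D)` is a homomorphism duality relative to the pointed instance `e`:
for every data example `e'` that maps homomorphically into `e`,
some element of `F` maps homomorphically into `e'` iff `e'` maps homomorphically
into no element of `D`. -/
def IsHomDualityRel {S : Schema} {k : ℕ} (e : PInst S k) (F D : Set (PInst S k)) : Prop :=
  ∀ e' : PInst S k, IsExample e' → PHom e' e →
    ((∃ f ∈ F, PHom f e') ↔ ∀ d ∈ D, ¬ PHom e' d)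

/-! ## Direct products -/

/-- The product of two facts with the same relation symbol, pairing values positionally
via the pairing function `Nat.pair`. -/
def DBFact.prod {S : Schema} (f g : DBFact S) (h : f.rel = g.rel) : DBFact S :=
  ⟨f.rel, List.zipWith Nat.pair f.args g.args, by
    rw [List.length_zipWith, f.arity_eq, g.arity_eq, h, min_self]⟩

/-- The direct product of two instances: all facts `R(⟨a₁,b₁⟩, …, ⟨aₙ,bₙ⟩)` with
`R(a₁,…,aₙ)` a fact of `I` and `R(b₁,…,bₙ)` a fact of `J`. -/
def Instance.prod {S : Schema} (I J : Instance S) : Instance S where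
  facts := { f | ∃ g ∈ I.facts, ∃ g' ∈ J.facts, ∃ h : g.rel = g'.rel, f = DBFact.prod g g' h }
  finite := by
    classical
    apply Set.Finite.subset (((I.finite.prod J.finite).image
      (fun p : DBFact S × DBFact S =>
        if h : p.1.rel = p.2.rel then DBFact.prod p.1 p.2 h else p.1)))
    rintro f ⟨g, hg, g', hg', h, rfl⟩
    exact ⟨(g, g'), ⟨hg, hg'⟩, dif_pos h⟩

/-- The direct product of two pointed instances. -/
def PInst.prod {S : Schema} {k : ℕ} (e e' : PInst S k) : PInst S k :=
  (e.1.prod e'.1, fun i => Nat.pair (e.2 i) (e'.2 i))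

/-! ## Path instances and path examples -/

/-- `I` is a path instance with chain values `a 0, …, a n` and chain relations
`R 1, …, R n`: its facts are the binary chain facts `R i (a (i-1), a i)` together
with unary facts on values `a j` with `j ≥ 1`. -/
def IsPathInstanceOn {S : Schema} (I : Instance S) (n : ℕ) (a : ℕ → ℕ) (R : ℕ → S.Rel) : Prop :=
  Set.InjOn a (Set.Iic n) ∧
  (∀ i, 1 ≤ i → i ≤ n → ∃ f ∈ I.facts, f.rel = R i ∧ f.args = [a (i - 1), a i]) ∧
  (∀ f ∈ I.facts,
      (∃ i, 1 ≤ i ∧ i ≤ n ∧ f.rel = R i ∧ f.args = [a (i - 1), a i]) ∨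
      (∃ j, 1 ≤ j ∧ j ≤ n ∧ f.args = [a j]))

/-- A path example: a unary pointed instance whose instance is a path instance and whose
distinguished value is the first value of the path. -/
def IsPathExample {S : Schema} (e : PInst S 1) : Prop :=
  ∃ (n : ℕ) (a : ℕ → ℕ) (R : ℕ → S.Rel), IsPathInstanceOn e.1 n a R ∧ e.2 0 = a 0
/-! ## PAC learning -/

open scoped BigOperators

/-- The error of a hypothesis CQ `q` relative to a target CQ `qT` and a probability
distribution `P` over pointed instances: the probability that a randomly drawn
example is labeled differently by `q` and by `qT`. -/
noncomputable def cqError {S : Schema} {k : ℕ} (P : PMF (PInst S k)) (qT q : CQ S k) :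
    ENNReal :=
  ∑' e : PInst S k,
    Set.indicator { e : PInst S k | e.2 ∈ symmDiff (q.eval e.1) (qT.eval e.1) }
      (fun e => P e) e

/-- The probability, under `N` i.i.d. draws from `P`, of a set `T` of samples. -/
noncomputable def iidProb {α : Type*} (P : PMF α) (N : ℕ) (T : Set (Fin N → α)) : ENNReal :=
  ∑' s : Fin N → α, Set.indicator T (fun s => ∏ i, P (s i)) s

/-- The collection of labeled examples obtained from a sample `s` of examples,
labeled according to the target CQ `qT`. -/
def labeledOf {S : Schema} {k : ℕ} (qT : CQ S k) {N : ℕ} (s : Fin N → PInst S k) :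
    LabeledExamples S k :=
  ⟨{ e | (∃ i, s i = e) ∧ e.2 ∈ qT.eval e.1 },
   { e | (∃ i, s i = e) ∧ e.2 ∉ qT.eval e.1 }⟩

/-- A (deterministic) algorithm taking collections of labeled examples over any schema
and arity to CQs. -/
def CQAlgorithm : Type 1 :=
  ∀ (S : Schema) (k : ℕ), LabeledExamples S k → CQ S k

/-- The size of a finite schema (its number of relation symbols together with
their arities). -/
noncomputable def Schema.size (S : Schema) [Fintype S.Rel] : ℕ :=
  ∑ R : S.Rel, (S.arity R + 1)

/-- `m` witnesses that `A` is a PAC learning algorithm: for all `ε, δ ∈ (0,1)`, all finite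
schemas `S`, all bounds `sQ, sE`, all probability distributions `P` over examples over `S`
with at most `sE` facts, and all target CQs `qT` with at most `sQ` atoms: when `A` is run
on at least `m (1/δ) (1/ε) |S| sQ sE` examples drawn i.i.d. from `P` and labeled by `qT`,
then with probability at least `1 - δ` over the sample, the returned CQ has error at
most `ε`. -/
def PACWitness (A : CQAlgorithm) (m : ℝ → ℝ → ℕ → ℕ → ℕ → ℕ) : Prop :=
  ∀ (ε δ : ℝ), 0 < ε → ε < 1 → 0 < δ → δ < 1 →
  ∀ (S : Schema) [Fintype S.Rel], ∀ (k sQ sE : ℕ) (P : PMF (PInst S k)),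
    (∀ e ∈ P.support, IsExample e ∧ e.1.facts.ncard ≤ sE) →
    ∀ qT : CQ S k, qT.atoms.ncard ≤ sQ →
    ∀ N : ℕ, m (1 / δ) (1 / ε) S.size sQ sE ≤ N →
      ENNReal.ofReal (1 - δ) ≤
        iidProb P N { s | cqError P qT (A S k (labeledOf qT s)) ≤ ENNReal.ofReal ε }

/-- `m` is bounded by a polynomial in its five arguments. -/
def IsPolyBounded (m : ℝ → ℝ → ℕ → ℕ → ℕ → ℕ) : Prop :=
  ∃ p : MvPolynomial (Fin 5) ℝ, ∀ (x y : ℝ) (a b c : ℕ),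
    (m x y a b c : ℝ) ≤ MvPolynomial.eval ![x, y, (a : ℝ), (b : ℝ), (c : ℝ)] p

/-- `A` is a sample-efficient PAC learning algorithm: some polynomially bounded
function `m` witnesses the PAC learning property for `A`. -/
def IsSampleEfficientPAC (A : CQAlgorithm) : Prop :=
  ∃ m : ℝ → ℝ → ℕ → ℕ → ℕ → ℕ, IsPolyBounded m ∧ PACWitness A m
/-!
Over two binary relations, let `L` be the path `0 → ⋯ → n` carrying both labels and, for each
word `w ∈ {0,1}ⁿ`, let `D_w` be an example into which a pointed instance mapping to `L` maps iff
it has no `w`-labelled walk from its root. Target the canonical CQ of `L` and draw `L` with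
probability `1/2`, each `D_w` with probability `2^{-(n+1)}`. On a sample containing `L`, the
union of the `w`-paths of the sampled `D_w` is a strongly most-general fitting CQ, and it accepts
every unsampled `D_w` (whose canonical CQ also fits). With fewer than `2^{n-1}` draws more than
half of the `D_w` are unsampled, so the error exceeds `1/4` as soon as `L` is drawn, which happens
with probability at least `1/2`. Since all sizes are linear in `n`, a polynomial sample bound
drops below `2^{n-1}` for large `n`.
-/

open scoped ENNReal

lemma Set.ncard_le_card_of_subset_range {α β : Type*} [Finite β] {s : Set α} {f : β → α}
    (h : s ⊆ Set.range f) : s.ncard ≤ Nat.card β :=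
  (Set.ncard_le_ncard h (Set.finite_range f)).trans (Finite.card_range_le f)

lemma PMF.map_apply_of_injective {α β : Type*} (p : PMF α) {f : α → β}
    (hf : Function.Injective f) (a : α) : p.map f (f a) = p a := by
  rw [PMF.map_apply, tsum_eq_single a fun b hb => if_neg fun h => hb (hf h).symm, if_pos rfl]

@[simp]
lemma DBFact.map_id {S : Schema} (f : DBFact S) : f.map id = f := by
  cases f
  simp [DBFact.map]

lemma self_mem_eval_canonCQ {S : Schema} {k : ℕ} {e : PInst S k} (he : IsExample e) :
    e.2 ∈ (canonCQ e).eval e.1 :=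
  ⟨he, id, fun f hf => by rw [DBFact.map_id]; exact hf, fun _ => rfl⟩

lemma sum_le_cqError {S : Schema} {k : ℕ} (P : PMF (PInst S k)) (qT q : CQ S k)
    (F : Finset (PInst S k)) (hF : ∀ e ∈ F, e.2 ∈ symmDiff (q.eval e.1) (qT.eval e.1)) :
    ∑ e ∈ F, P e ≤ cqError P qT q := by
  let bad : Set (PInst S k) := {e | e.2 ∈ symmDiff (q.eval e.1) (qT.eval e.1)}
  calc ∑ e ∈ F, P e = ∑ e ∈ F, bad.indicator (fun e => P e) e :=
        Finset.sum_congr rfl fun e he => (Set.indicator_of_mem (s := bad) (hF e he) _).symm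
    _ ≤ cqError P qT q := ENNReal.sum_le_tsum F

section IidProb

variable {α : Type*} (P : PMF α)

lemma tsum_head_mul_prod_tail (N : ℕ) (g : α → ℝ≥0∞) :
    ∑' s : Fin (N + 1) → α, g (s 0) * ∏ i : Fin N, P (s i.succ)
      = ∑' a, g a * ∑' t : Fin N → α, ∏ i, P (t i) := by
  rw [← (Fin.consEquiv fun _ => α).tsum_eq, ENNReal.tsum_prod']
  simp [ENNReal.tsum_mul_left]

lemma tsum_prod_pmf_eq_one (N : ℕ) : ∑' s : Fin N → α, ∏ i, P (s i) = 1 := by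
  induction N with
  | zero => simp
  | succ N ih =>
    simp_rw [Fin.prod_univ_succ]
    rw [tsum_head_mul_prod_tail, ih]
    simp [PMF.tsum_coe]

lemma iidProb_head_mem (N : ℕ) (A : Set α) :
    iidProb P (N + 1) {s | s 0 ∈ A} = P.toOuterMeasure A := by
  have hsplit : ∀ s : Fin (N + 1) → α, {s : Fin (N + 1) → α | s 0 ∈ A}.indicator
      (fun s => ∏ i, P (s i)) s = A.indicator P (s 0) * ∏ i : Fin N, P (s i.succ) := by
    intro s
    by_cases hs : s 0 ∈ A <;> simp [hs, Fin.prod_univ_succ]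
  rw [iidProb, tsum_congr hsplit, tsum_head_mul_prod_tail, tsum_prod_pmf_eq_one,
    PMF.toOuterMeasure_apply]
  simp

lemma PMF.toOuterMeasure_compl_singleton_add (x : α) :
    P.toOuterMeasure {x}ᶜ + P x = 1 := by
  rw [PMF.toOuterMeasure_apply, add_comm, ← P.tsum_coe, ENNReal.tsum_eq_add_tsum_ite (f := ⇑P) x]
  refine congrArg (P x + ·) (tsum_congr fun a => ?_)
  by_cases ha : a = x <;> simp [ha]

lemma iidProb_add_le_one_of_avoid {N : ℕ} (hN : 0 < N) (x : α) (T : Set (Fin N → α))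
    (hT : ∀ s ∈ T, ∏ i, P (s i) ≠ 0 → ∀ i, s i ≠ x) :
    iidProb P N T + P x ≤ 1 := by
  obtain ⟨M, rfl⟩ : ∃ M, N = M + 1 := ⟨N - 1, by omega⟩
  calc iidProb P (M + 1) T + P x ≤ iidProb P (M + 1) {s | s 0 ∈ ({x}ᶜ : Set α)} + P x := by
        gcongr
        refine ENNReal.tsum_le_tsum fun s => ?_
        by_cases hs : s ∈ T
        · by_cases hp : ∏ i, P (s i) = 0
          · simp [Set.indicator, hs, hp]
          · simp [Set.indicator, hs, hT s hs hp 0]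
        · simp [hs]
    _ = 1 := by rw [iidProb_head_mem, PMF.toOuterMeasure_compl_singleton_add]

end IidProb

lemma MvPolynomial.eventually_eval_affine_lt {σ : Type*} (p : MvPolynomial σ ℝ) (a b : σ → ℝ)
    {r : ℝ} (hr : 1 < r) {c : ℝ} (hc : 0 < c) :
    ∀ᶠ n : ℕ in Filter.atTop, eval (fun i => a i + b i * n) p < c * r ^ n := by
  set q : Polynomial ℝ :=
    eval₂ Polynomial.C (fun i => Polynomial.C (a i) + Polynomial.C (b i) * Polynomial.X) p
  have hq : ∀ x : ℝ, q.eval x = eval (fun i => a i + b i * x) p := fun x => by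
    have hC : (Polynomial.evalRingHom x).comp Polynomial.C = RingHom.id ℝ := by ext; simp
    simp only [q, polynomial_eval_eval₂, hC, Polynomial.eval_add, Polynomial.eval_mul,
      Polynomial.eval_C, Polynomial.eval_X]
    rfl
  have hO : (fun n : ℕ => q.eval (n : ℝ)) =O[Filter.atTop] fun n : ℕ => (n : ℝ) ^ q.natDegree := by
    simpa [Function.comp_def] using (Polynomial.isBigO_atTop_of_degree_le q
      (Polynomial.X ^ q.natDegree) (by simp [Polynomial.degree_le_natDegree])).comp_tendsto
      tendsto_natCast_atTop_atTop
  have ho := hO.trans_isLittleO (isLittleO_pow_const_const_pow_of_one_lt q.natDegree hr)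
  filter_upwards [ho.def (half_pos hc)] with n hn
  rw [← hq]
  have hrn : 0 < r ^ n := pow_pos (by linarith) n
  calc q.eval (n : ℝ) ≤ ‖q.eval (n : ℝ)‖ := Real.le_norm_self _
    _ ≤ c / 2 * ‖r ^ n‖ := hn
    _ < c * r ^ n := by rw [Real.norm_of_nonneg hrn.le]; nlinarith

lemma IsPolyBounded.eventually_lt_two_pow {m : ℝ → ℝ → ℕ → ℕ → ℕ → ℕ} (hm : IsPolyBounded m)
    (x y : ℝ) (a b c : ℕ) :
    ∀ᶠ n : ℕ in Filter.atTop, m x y a (b * n) (c * n) < 2 ^ (n - 1) := by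
  obtain ⟨p, hp⟩ := hm
  filter_upwards [p.eventually_eval_affine_lt ![x, y, a, 0, 0] ![0, 0, 0, b, c] one_lt_two
    one_half_pos, Filter.eventually_ge_atTop 1] with n hlt hn
  have hv : (fun i => (![x, y, a, 0, 0] : Fin 5 → ℝ) i + (![0, 0, 0, b, c] : Fin 5 → ℝ) i * n)
      = ![x, y, (a : ℝ), ((b * n : ℕ) : ℝ), ((c * n : ℕ) : ℝ)] := by
    funext i
    fin_cases i <;> simp
  have h2 : (1 / 2 : ℝ) * 2 ^ n = 2 ^ (n - 1) := by
    rw [one_div, inv_mul_eq_div, div_eq_iff two_ne_zero, ← pow_succ, Nat.sub_add_cancel hn]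
  exact_mod_cast (hp _ _ _ _ _).trans_lt (hv ▸ h2 ▸ hlt)

def CQAlgorithm.ReturnsStronglyMostGeneralFit (A : CQAlgorithm) : Prop :=
  ∀ (S : Schema) (k : ℕ) (E : LabeledExamples S k),
    (∃ q : CQ S k, IsStronglyMostGeneralFit q E) → IsStronglyMostGeneralFit (A S k E) E

namespace HardFamily

def schema : Schema := ⟨Bool, fun _ => 2⟩

instance : Fintype schema.Rel := inferInstanceAs (Fintype Bool)

lemma schema_size : schema.size = 6 := rfl

def edge (c : Bool) (u v : ℕ) : DBFact schema := ⟨c, [u, v], rfl⟩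

lemma edge_inj {c c' : Bool} {u u' v v' : ℕ} :
    edge c u v = edge c' u' v' ↔ c = c' ∧ u = u' ∧ v = v' := by
  constructor
  · intro h
    injection h with hc hargs
    simp_all
  · rintro ⟨rfl, rfl, rfl⟩
    rfl

lemma edge_map (h : ℕ → ℕ) (c : Bool) (u v : ℕ) : (edge c u v).map h = edge c (h u) (h v) := rfl

lemma exists_eq_edge (f : DBFact schema) : ∃ c u v, f = edge c u v := by
  obtain ⟨c, args, hlen⟩ := f
  obtain ⟨u, v, rfl⟩ := List.length_eq_two.mp hlen
  exact ⟨c, u, v, rfl⟩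

lemma isHom_iff {I J : Instance schema} {h : ℕ → ℕ} :
    IsHom I J h ↔ ∀ c u v, edge c u v ∈ I.facts → edge c (h u) (h v) ∈ J.facts := by
  refine ⟨fun hh c u v hf => hh _ hf, fun hh f hf => ?_⟩
  obtain ⟨c, u, v, rfl⟩ := exists_eq_edge f
  exact hh c u v hf

def edgeSet (E : Bool → ℕ → ℕ → Prop) : Set (DBFact schema) :=
  {f | ∃ c u v, E c u v ∧ f = edge c u v}

@[simp]
lemma edge_mem_edgeSet {E : Bool → ℕ → ℕ → Prop} {c : Bool} {u v : ℕ} :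
    edge c u v ∈ edgeSet E ↔ E c u v := by
  refine ⟨?_, fun h => ⟨c, u, v, h, rfl⟩⟩
  rintro ⟨c', u', v', h, he⟩
  obtain ⟨rfl, rfl, rfl⟩ := edge_inj.mp he
  exact h

variable {n : ℕ}

def LayeredEdge (n : ℕ) (_ : Bool) (u v : ℕ) : Prop := u < n ∧ v = u + 1

lemma layeredEdges_subset_range (n : ℕ) :
    edgeSet (LayeredEdge n) ⊆ Set.range fun p : Bool × Fin n => edge p.1 p.2 (p.2 + 1) := by
  rintro f ⟨c, u, v, ⟨hu, rfl⟩, rfl⟩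
  exact ⟨(c, ⟨u, hu⟩), rfl⟩

def layered (n : ℕ) : Instance schema :=
  ⟨edgeSet (LayeredEdge n), (Set.finite_range _).subset (layeredEdges_subset_range n)⟩

/-- Vertex `2 i` is the `i`-th vertex on the track of `w` and `2 i + 1` the `i`-th vertex off
it. Reading `w i` on the track keeps a walk on it, any other letter may leave it, off the track
every walk can go on, and the track has no edge out of level `n - 1`: from `0`, exactly the
`w`-walk gets stuck. -/
def DualEdge (n : ℕ) (w : ℕ → Bool) (c : Bool) (u v : ℕ) : Prop :=
  ∃ i, (u = 2 * i ∧ v = 2 * i + 2 ∧ i + 1 < n) ∨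
    (u = 2 * i ∧ v = 2 * i + 3 ∧ i < n ∧ c ≠ w i) ∨
    (u = 2 * i + 1 ∧ v = 2 * i + 3 ∧ i < n) ∨
    (u = 2 * i + 1 ∧ v = 2 * i + 2 ∧ i + 1 < n)

lemma dualEdges_subset_range (n : ℕ) (w : ℕ → Bool) :
    edgeSet (DualEdge n w) ⊆ Set.range fun p : Bool × Fin n × Bool × Bool =>
      edge p.1 (2 * p.2.1 + if p.2.2.1 then 0 else 1)
        (2 * p.2.1 + 2 + if p.2.2.2 then 0 else 1) := by
  rintro f ⟨c, u, v, ⟨i, ⟨rfl, rfl, hi⟩ | ⟨rfl, rfl, hi, -⟩ | ⟨rfl, rfl, hi⟩ | ⟨rfl, rfl, hi⟩⟩, rfl⟩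
  · exact ⟨(c, ⟨i, by omega⟩, true, true), by simp⟩
  · exact ⟨(c, ⟨i, hi⟩, true, false), by simp⟩
  · exact ⟨(c, ⟨i, hi⟩, false, false), by simp⟩
  · exact ⟨(c, ⟨i, by omega⟩, false, true), by simp⟩

def dual (n : ℕ) (w : ℕ → Bool) : Instance schema :=
  ⟨edgeSet (DualEdge n w), (Set.finite_range _).subset (dualEdges_subset_range n w)⟩

lemma layered_facts_ncard_le (n : ℕ) : (layered n).facts.ncard ≤ 8 * n := by
  refine (Set.ncard_le_card_of_subset_range (layeredEdges_subset_range n)).trans ?_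
  simp
  omega

lemma dual_facts_ncard_le (n : ℕ) (w : ℕ → Bool) : (dual n w).facts.ncard ≤ 8 * n := by
  refine (Set.ncard_le_card_of_subset_range (dualEdges_subset_range n w)).trans ?_
  simp
  omega

lemma zero_mem_adom_layered (hn : 0 < n) : 0 ∈ (layered n).adom :=
  ⟨edge true 0 1, edge_mem_edgeSet.mpr ⟨hn, rfl⟩, by simp [edge]⟩

lemma zero_mem_adom_dual (hn : 0 < n) (w : ℕ → Bool) : 0 ∈ (dual n w).adom :=
  ⟨edge (!w 0) 0 3, edge_mem_edgeSet.mpr ⟨0, Or.inr (Or.inl ⟨rfl, rfl, hn, by simp⟩)⟩,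
    by simp [edge]⟩

lemma dualEdge_of_levels {w : ℕ → Bool} {c : Bool} {i : ℕ} (p q : Prop) [Decidable p]
    [Decidable q] (hi : i < n) (hq : q → i + 1 < n) (hpq : p → c = w i → q) :
    DualEdge n w c (2 * i + if p then 0 else 1) (2 * (i + 1) + if q then 0 else 1) := by
  refine ⟨i, ?_⟩
  by_cases hp : p <;> by_cases hq' : q
  · rw [if_pos hp, if_pos hq']
    exact Or.inl ⟨rfl, by ring, hq hq'⟩
  · rw [if_pos hp, if_neg hq']
    exact Or.inr (Or.inl ⟨rfl, by ring, hi, fun hc => hq' (hpq hp hc)⟩)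
  · rw [if_neg hp, if_pos hq']
    exact Or.inr (Or.inr (Or.inr ⟨rfl, by ring, hq hq'⟩))
  · rw [if_neg hp, if_neg hq']
    exact Or.inr (Or.inr (Or.inl ⟨rfl, by ring, hi⟩))

lemma dualEdge_on_track {w : ℕ → Bool} {i v : ℕ} (h : DualEdge n w (w i) (2 * i) v) :
    v = 2 * i + 2 ∧ i + 1 < n := by
  obtain ⟨j, ⟨hu, hv, hj⟩ | ⟨hu, hv, hj, hc⟩ | ⟨hu, -⟩ | ⟨hu, -⟩⟩ := h
  · exact ⟨by omega, by omega⟩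
  · obtain rfl : i = j := by omega
    exact absurd rfl hc
  · omega
  · omega

lemma dual_hom_layered (w : ℕ → Bool) : IsHom (dual n w) (layered n) (· / 2) := by
  refine isHom_iff.mpr fun c u v hf => edge_mem_edgeSet.mpr ?_
  obtain ⟨i, ⟨rfl, rfl, hi⟩ | ⟨rfl, rfl, hi, -⟩ | ⟨rfl, rfl, hi⟩ | ⟨rfl, rfl, hi⟩⟩ :=
    edge_mem_edgeSet.mp hf <;> exact ⟨by omega, by omega⟩

def HasWalk (n : ℕ) (I : Instance schema) (w : ℕ → Bool) (a : ℕ) : Prop :=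
  ∃ ρ : ℕ → ℕ, ρ 0 = a ∧ ∀ i < n, edge (w i) (ρ i) (ρ (i + 1)) ∈ I.facts

def HasWalkTo (I : Instance schema) (w : ℕ → Bool) (k a v : ℕ) : Prop :=
  ∃ ρ : ℕ → ℕ, ρ 0 = a ∧ ρ k = v ∧ ∀ i < k, edge (w i) (ρ i) (ρ (i + 1)) ∈ I.facts

lemma HasWalk.map {I J : Instance schema} {h : ℕ → ℕ} (hh : IsHom I J h) {w : ℕ → Bool}
    {a : ℕ} : HasWalk n I w a → HasWalk n J w (h a) := by
  rintro ⟨ρ, rfl, hρ⟩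
  exact ⟨h ∘ ρ, rfl, fun i hi => isHom_iff.mp hh _ _ _ (hρ i hi)⟩

lemma hasWalkTo_zero (I : Instance schema) (w : ℕ → Bool) (a : ℕ) : HasWalkTo I w 0 a a :=
  ⟨fun _ => a, rfl, rfl, fun _ h => absurd h (Nat.not_lt_zero _)⟩

lemma HasWalkTo.snoc {I : Instance schema} {w : ℕ → Bool} {k a u v : ℕ}
    (hw : HasWalkTo I w k a u) (hf : edge (w k) u v ∈ I.facts) : HasWalkTo I w (k + 1) a v := by
  obtain ⟨ρ, h0, hk, hρ⟩ := hw
  refine ⟨Function.update ρ (k + 1) v, by simpa using h0, by simp, fun i hi => ?_⟩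
  rcases Nat.lt_succ_iff_lt_or_eq.mp hi with hi | rfl
  · rw [Function.update_of_ne (by omega), Function.update_of_ne (by omega)]
    exact hρ i hi
  · rw [Function.update_self, Function.update_of_ne (by omega), hk]
    exact hf

lemma HasWalkTo.hasWalk {I : Instance schema} {w : ℕ → Bool} {a v : ℕ}
    (hw : HasWalkTo I w n a v) : HasWalk n I w a :=
  let ⟨ρ, h0, _, hρ⟩ := hw
  ⟨ρ, h0, hρ⟩

lemma hasWalk_layered (n : ℕ) (w : ℕ → Bool) : HasWalk n (layered n) w 0 :=
  ⟨id, rfl, fun _ hi => edge_mem_edgeSet.mpr ⟨hi, rfl⟩⟩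

lemma not_hasWalk_dual (hn : 0 < n) (w : ℕ → Bool) : ¬ HasWalk n (dual n w) w 0 := by
  rintro ⟨ρ, h0, hρ⟩
  have on_track : ∀ i < n, ρ i = 2 * i := by
    intro i
    induction i with
    | zero => exact fun _ => h0
    | succ i ih =>
      intro hi
      have hf := hρ i (by omega)
      rw [ih (by omega)] at hf
      exact (dualEdge_on_track (edge_mem_edgeSet.mp hf)).1
  have hf := hρ (n - 1) (by omega)
  rw [on_track (n - 1) (by omega)] at hf
  have := (dualEdge_on_track (edge_mem_edgeSet.mp hf)).2
  omega

lemma hasWalk_dual_of_ne {w v : ℕ → Bool} {j : ℕ} (hj : j < n) (hne : v j ≠ w j) :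
    HasWalk n (dual n w) v 0 := by
  refine ⟨fun i => 2 * i + if i ≤ j then 0 else 1, by simp, fun i hi => ?_⟩
  refine edge_mem_edgeSet.mpr (dualEdge_of_levels _ _ hi (fun _ => by omega) fun hij hc => ?_)
  by_contra hij'
  obtain rfl : i = j := by omega
  exact hne hc

/-- Relative to `layered n`, the single path with word `w` and the example `dual n w` form a
homomorphism duality. -/
lemma hasWalk_or_hom_dual {G : Instance schema} {ℓ : ℕ → ℕ} (hℓ : IsHom G (layered n) ℓ)
    {a : ℕ} (ha : ℓ a = 0) (w : ℕ → Bool) :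
    HasWalk n G w a ∨ ∃ h, IsHom G (dual n w) h ∧ h a = 0 := by
  classical
  by_cases hw : HasWalk n G w a
  · exact Or.inl hw
  right
  -- `ℓ` gives the level of a vertex; the vertices on the track are those reached from `a`
  -- by reading the first `ℓ v` letters of `w`
  let onTrack v := HasWalkTo G w (ℓ v) a v
  have level_ne : ∀ v, onTrack v → ℓ v ≠ n := fun v (hv : HasWalkTo G w (ℓ v) a v) heq =>
    hw (heq ▸ hv).hasWalk
  refine ⟨fun v => 2 * ℓ v + if onTrack v then 0 else 1, isHom_iff.mpr fun c u v hf => ?_, ?_⟩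
  · obtain ⟨hu, hv⟩ := edge_mem_edgeSet.mp (isHom_iff.mp hℓ c u v hf)
    have hq : onTrack v → ℓ u + 1 < n := fun h => by have := level_ne v h; omega
    have hpq : onTrack u → c = w (ℓ u) → onTrack v := fun hp hc => by
      change HasWalkTo G w (ℓ v) a v
      rw [hv]
      exact hp.snoc (hc ▸ hf)
    have := dualEdge_of_levels (onTrack u) (onTrack v) hu hq hpq
    rw [← hv] at this
    exact edge_mem_edgeSet.mpr this
  · have : onTrack a := by
      change HasWalkTo G w (ℓ a) a a
      rw [ha]
      exact hasWalkTo_zero G w a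
    simp [this, ha]

section PathsCQ

variable {ι : Type*} [Encodable ι]

/-- All paths share the answer variable `0`; the other variables, `Nat.pair (encode j) i`, are
nonzero and distinct. -/
def pathVar (j : ι) (i : ℕ) : ℕ := if i = 0 then 0 else Nat.pair (Encodable.encode j) i

def pathsCQ [Finite ι] (n : ℕ) (w : ι → ℕ → Bool) (V : Set ι) : CQ schema 1 where
  atoms := {f | ∃ j ∈ V, ∃ i < n, f = edge (w j i) (pathVar j i) (pathVar j (i + 1))}
  finite := by
    refine (Set.finite_range fun p : ι × Fin n =>
      edge (w p.1 p.2) (pathVar p.1 p.2) (pathVar p.1 (p.2 + 1))).subset ?_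
    rintro f ⟨j, -, i, hi, rfl⟩
    exact ⟨(j, ⟨i, hi⟩), rfl⟩
  ans := 0

lemma mem_eval_pathsCQ_iff [Finite ι] {w : ι → ℕ → Bool} {V : Set ι} {I : Instance schema}
    {a : Fin 1 → ℕ} :
    a ∈ (pathsCQ n w V).eval I ↔ (∀ i, a i ∈ I.adom) ∧ ∀ j ∈ V, HasWalk n I (w j) (a 0) := by
  refine and_congr_right fun _ => ⟨?_, fun hw => ?_⟩
  · rintro ⟨h, hh, hans⟩ j hj
    exact ⟨h ∘ pathVar j, by simpa [pathVar, pathsCQ] using hans 0,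
      fun i hi => hh _ ⟨j, hj, i, hi, rfl⟩⟩
  · classical
    have : ∀ j, ∃ ρ : ℕ → ℕ, j ∈ V →
        ρ 0 = a 0 ∧ ∀ i < n, edge (w j i) (ρ i) (ρ (i + 1)) ∈ I.facts := fun j =>
      if hj : j ∈ V then (hw j hj).imp fun _ h _ => h else ⟨id, fun h => absurd h hj⟩
    choose ρ hρ using this
    let h : ℕ → ℕ := fun z =>
      if z = 0 then a 0 else (Encodable.decode (α := ι) z.unpair.1).elim 0 (ρ · z.unpair.2)
    have h_pathVar : ∀ j ∈ V, ∀ i, h (pathVar j i) = ρ j i := by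
      intro j hj i
      rcases eq_or_ne i 0 with rfl | hi
      · simp [h, pathVar, (hρ j hj).1]
      · have : Nat.pair (Encodable.encode j) i ≠ 0 := by
          have := Nat.right_le_pair (Encodable.encode j) i
          omega
        simp [h, pathVar, hi, this]
    refine ⟨h, ?_, fun i => ?_⟩
    · rintro f ⟨j, hj, i, hi, rfl⟩
      rw [edge_map, h_pathVar j hj, h_pathVar j hj]
      exact (hρ j hj).2 i hi
    · rw [Subsingleton.elim i 0]
      simp [h, pathsCQ]

lemma contained_pathsCQ [Finite ι] {w : ι → ℕ → Bool} {V : Set ι} {q : CQ schema 1}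
    (hq : ∀ j ∈ V, HasWalk n ⟨q.atoms, q.finite⟩ (w j) (q.ans 0)) :
    q.contained (pathsCQ n w V) := by
  rintro I a ⟨had, h, hh, hans⟩
  exact mem_eval_pathsCQ_iff.mpr
    ⟨had, fun j hj => hans 0 ▸ (hq j hj).map (I := ⟨q.atoms, q.finite⟩) hh⟩

end PathsCQ

def extendWord (W : Fin n → Bool) : ℕ → Bool := fun i => if h : i < n then W ⟨i, h⟩ else false

lemma exists_extendWord_ne {W W' : Fin n → Bool} (h : W ≠ W') :
    ∃ j < n, extendWord W j ≠ extendWord W' j := by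
  obtain ⟨j, hj⟩ := Function.ne_iff.mp h
  exact ⟨j, j.isLt, by simpa [extendWord] using hj⟩

lemma eq_of_dual_facts_eq {w w' : ℕ → Bool} (h : (dual n w).facts = (dual n w').facts) {j : ℕ}
    (hj : j < n) : w j = w' j := by
  have hmem : edge (!w j) (2 * j) (2 * j + 3) ∈ (dual n w').facts :=
    h ▸ edge_mem_edgeSet.mpr ⟨j, Or.inr (Or.inl ⟨rfl, rfl, hj, by simp⟩)⟩
  obtain ⟨i, ⟨-, hv, -⟩ | ⟨hu, -, -, hc⟩ | ⟨hu, -⟩ | ⟨hu, -⟩⟩ := edge_mem_edgeSet.mp hmem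
  · omega
  · obtain rfl : j = i := by omega
    simpa using hc
  · omega
  · omega

lemma layered_facts_ne_dual (hn : 0 < n) (w : ℕ → Bool) : (layered n).facts ≠ (dual n w).facts := by
  intro h
  have hmem : edge true 0 1 ∈ (dual n w).facts := h ▸ edge_mem_edgeSet.mpr ⟨hn, rfl⟩
  obtain ⟨i, ⟨-, hv, -⟩ | ⟨-, hv, -⟩ | ⟨hu, -⟩ | ⟨hu, -⟩⟩ := edge_mem_edgeSet.mp hmem <;> omega

def hardExample (n : ℕ) : Option (Fin n → Bool) → PInst schema 1
  | none => (layered n, 0)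
  | some W => (dual n (extendWord W), 0)

lemma hardExample_some_injective : Function.Injective fun W : Fin n → Bool =>
    hardExample n (some W) := by
  intro W W' h
  by_contra hne
  obtain ⟨j, hj, hjne⟩ := exists_extendWord_ne hne
  exact hjne (eq_of_dual_facts_eq (congrArg (·.1.facts) h) hj)

lemma hardExample_injective (hn : 0 < n) : Function.Injective (hardExample n) := by
  rintro (_ | W) (_ | W') h <;> have hfacts := congrArg (·.1.facts) h
  · rfl
  · exact absurd hfacts (layered_facts_ne_dual hn _)
  · exact absurd hfacts.symm (layered_facts_ne_dual hn _)
  · exact congrArg some (hardExample_some_injective h)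

lemma isExample_hardExample (hn : 0 < n) : ∀ o, IsExample (hardExample n o)
  | none => fun _ => zero_mem_adom_layered hn
  | some _ => fun _ => zero_mem_adom_dual hn _

lemma hardExample_ncard_le : ∀ o, (hardExample n o).1.facts.ncard ≤ 8 * n
  | none => layered_facts_ncard_le n
  | some _ => dual_facts_ncard_le n _

lemma inv_two_pow_succ_sum (n : ℕ) :
    2⁻¹ + ∑ _W : Fin n → Bool, ((2 : ℝ≥0∞) ^ (n + 1))⁻¹ = 1 := by
  rw [Finset.sum_const, Finset.card_univ, Fintype.card_fun, Fintype.card_bool, Fintype.card_fin,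
    nsmul_eq_mul, pow_succ, ENNReal.mul_inv (by simp) (by simp), ← mul_assoc, Nat.cast_pow,
    Nat.cast_ofNat, ENNReal.mul_inv_cancel (by simp) (by simp), one_mul,
    ENNReal.inv_two_add_inv_two]

noncomputable def hardWeights (n : ℕ) : PMF (Option (Fin n → Bool)) :=
  PMF.ofFintype (fun o => o.elim 2⁻¹ fun _ => (2 ^ (n + 1))⁻¹) <| by
    rw [Fintype.sum_option]
    exact inv_two_pow_succ_sum n

noncomputable def hardDist (n : ℕ) : PMF (PInst schema 1) := (hardWeights n).map (hardExample n)

lemma hardDist_none (hn : 0 < n) : hardDist n (hardExample n none) = 2⁻¹ :=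
  PMF.map_apply_of_injective _ (hardExample_injective hn) none

lemma hardDist_some (hn : 0 < n) (W : Fin n → Bool) :
    hardDist n (hardExample n (some W)) = ((2 : ℝ≥0∞) ^ (n + 1))⁻¹ :=
  PMF.map_apply_of_injective _ (hardExample_injective hn) (some W)

lemma exists_eq_hardExample_of_mem_support {e : PInst schema 1} (he : e ∈ (hardDist n).support) :
    ∃ o, e = hardExample n o := by
  obtain ⟨o, -, rfl⟩ := (PMF.support_map _ _ ▸ he : e ∈ hardExample n '' _)
  exact ⟨o, rfl⟩

def target (n : ℕ) : CQ schema 1 := canonCQ (hardExample n none)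

lemma target_eval_layered (hn : 0 < n) : 0 ∈ (target n).eval (layered n) :=
  self_mem_eval_canonCQ (isExample_hardExample hn none)

lemma not_target_eval_dual (hn : 0 < n) (w : ℕ → Bool) : 0 ∉ (target n).eval (dual n w) := by
  rintro ⟨-, h, hh, h0⟩
  have h0 : h 0 = 0 := h0 0
  exact not_hasWalk_dual hn w (h0 ▸ (hasWalk_layered n w).map hh)

section Sample

variable {N : ℕ} (s : Fin N → PInst schema 1)

def sampledWords (n : ℕ) : Set (Fin n → Bool) := {W | ∃ i, s i = hardExample n (some W)}

variable {s}

lemma fits_labeledOf_target_iff (hn : 0 < n) (hs : ∀ i, ∃ o, s i = hardExample n o)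
    (hL : ∃ i, s i = hardExample n none) (q : CQ schema 1) :
    q.fits (labeledOf (target n) s) ↔
      0 ∈ q.eval (layered n) ∧ ∀ W ∈ sampledWords s n, 0 ∉ q.eval (dual n (extendWord W)) := by
  refine ⟨fun ⟨hpos, hneg⟩ => ⟨hpos _ ⟨hL, target_eval_layered hn⟩,
    fun W hW => hneg _ ⟨hW, not_target_eval_dual hn _⟩⟩, fun ⟨hL', hD⟩ => ⟨?_, ?_⟩⟩
  · rintro _ ⟨⟨i, rfl⟩, he⟩
    obtain ⟨_ | W, ho⟩ := hs i <;> rw [ho] at he ⊢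
    · exact hL'
    · exact absurd he (not_target_eval_dual hn _)
  · rintro _ ⟨⟨i, rfl⟩, he⟩
    obtain ⟨_ | W, ho⟩ := hs i <;> rw [ho] at he ⊢
    · exact absurd (target_eval_layered hn) he
    · exact hD W ⟨i, ho⟩

lemma isStronglyMostGeneralFit_pathsCQ (hn : 0 < n) (hs : ∀ i, ∃ o, s i = hardExample n o)
    (hL : ∃ i, s i = hardExample n none) :
    IsStronglyMostGeneralFit (pathsCQ n extendWord (sampledWords s n))
      (labeledOf (target n) s) := by
  refine ⟨(fits_labeledOf_target_iff hn hs hL _).mpr ⟨?_, fun W hW h => ?_⟩, fun q hq => ?_⟩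
  · exact mem_eval_pathsCQ_iff.mpr
      ⟨fun _ => zero_mem_adom_layered hn, fun _ _ => hasWalk_layered n _⟩
  · exact not_hasWalk_dual hn _ ((mem_eval_pathsCQ_iff.mp h).2 W hW)
  obtain ⟨⟨-, ℓ, hℓ, hℓ0⟩, hD⟩ := (fits_labeledOf_target_iff hn hs hL q).mp hq
  refine contained_pathsCQ fun W hW =>
    (hasWalk_or_hom_dual (G := ⟨q.atoms, q.finite⟩) hℓ (hℓ0 0) _).resolve_right ?_
  rintro ⟨h, hh, h0⟩
  exact hD W hW ⟨fun _ => zero_mem_adom_dual hn _, h, hh, fun i => Subsingleton.elim i 0 ▸ h0⟩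

lemma not_canonCQ_eval_dual (hn : 0 < n) {W W' : Fin n → Bool} (hne : W ≠ W') :
    0 ∉ (canonCQ (hardExample n (some W))).eval (dual n (extendWord W')) := by
  rintro ⟨-, h, hh, h0⟩
  have h0 : h 0 = 0 := h0 0
  obtain ⟨j, hj, hjne⟩ := exists_extendWord_ne hne
  exact not_hasWalk_dual hn _ (h0 ▸ (hasWalk_dual_of_ne hj hjne.symm).map hh)

lemma fits_canonCQ_of_not_sampled (hn : 0 < n) (hs : ∀ i, ∃ o, s i = hardExample n o)
    (hL : ∃ i, s i = hardExample n none) {W : Fin n → Bool} (hW : W ∉ sampledWords s n) :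
    (canonCQ (hardExample n (some W))).fits (labeledOf (target n) s) :=
  (fits_labeledOf_target_iff hn hs hL _).mpr
    ⟨⟨fun _ => zero_mem_adom_layered hn, (· / 2), dual_hom_layered _, fun _ => Nat.zero_div 2⟩,
      fun _ hW' => not_canonCQ_eval_dual hn fun h => hW (h ▸ hW')⟩

lemma card_sampledWords_le [DecidablePred (· ∈ sampledWords s n)] :
    (Finset.univ.filter (· ∈ sampledWords s n)).card ≤ N := by
  classical
  calc (Finset.univ.filter (· ∈ sampledWords s n)).card ≤ (Finset.univ.image s).card :=
        Finset.card_le_card_of_injOn (fun W => hardExample n (some W))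
          (fun W hW => by
            obtain ⟨i, hi⟩ := (Finset.mem_filter.mp hW).2
            exact Finset.mem_image.mpr ⟨i, Finset.mem_univ i, hi⟩)
          hardExample_some_injective.injOn
    _ ≤ N := Finset.card_image_le.trans (by simp)

end Sample

lemma quarter_lt_card_mul {K : ℕ} (hn : 0 < n) (hK : 2 ^ (n - 1) < K) :
    (4 : ℝ≥0∞)⁻¹ < K * ((2 : ℝ≥0∞) ^ (n + 1))⁻¹ := by
  have h4 : (2 : ℝ≥0∞) ^ (n + 1) = 2 ^ (n - 1) * 4 := by
    rw [show n + 1 = n - 1 + 2 by omega, pow_add]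
    norm_num
  calc (4 : ℝ≥0∞)⁻¹ = (2 ^ (n - 1) : ℕ) * ((2 : ℝ≥0∞) ^ (n + 1))⁻¹ := by
        rw [h4, ENNReal.mul_inv (by simp) (by simp), ← mul_assoc, Nat.cast_pow, Nat.cast_ofNat,
          ENNReal.mul_inv_cancel (by simp) (by simp), one_mul]
    _ < K * ((2 : ℝ≥0∞) ^ (n + 1))⁻¹ :=
        ENNReal.mul_lt_mul_left (by simp) (by simp) (Nat.cast_lt.mpr hK)

/-- A strongly most-general fitting CQ accepts every negative example missing from the sample,
and fewer than `2 ^ (n - 1)` draws leave more than half of them out. -/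
lemma quarter_lt_cqError {N : ℕ} {s : Fin N → PInst schema 1} (hn : 0 < n) {A : CQAlgorithm}
    (hA : A.ReturnsStronglyMostGeneralFit)
    (hN : N < 2 ^ (n - 1)) (hs : ∀ i, ∃ o, s i = hardExample n o)
    (hL : ∃ i, s i = hardExample n none) :
    (4 : ℝ≥0∞)⁻¹ < cqError (hardDist n) (target n) (A schema 1 (labeledOf (target n) s)) := by
  classical
  have hq := hA schema 1 _ ⟨_, isStronglyMostGeneralFit_pathsCQ hn hs hL⟩
  let U := Finset.univ.filter (· ∉ sampledWords s n)
  have hU : 2 ^ (n - 1) < U.card := by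
    have hsplit : (Finset.univ.filter (· ∈ sampledWords s n)).card + U.card = 2 ^ n := by
      rw [Finset.card_filter_add_card_filter_not]
      simp
    have hsampled := card_sampledWords_le (s := s) (n := n)
    have h2n : 2 ^ n = 2 ^ (n - 1) + 2 ^ (n - 1) := by
      rw [← two_mul, ← pow_succ', Nat.sub_add_cancel hn]
    omega
  calc (4 : ℝ≥0∞)⁻¹ < U.card * ((2 : ℝ≥0∞) ^ (n + 1))⁻¹ := quarter_lt_card_mul hn hU
    _ = ∑ e ∈ U.image fun W => hardExample n (some W), hardDist n e := by
        rw [Finset.sum_image hardExample_some_injective.injOn]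
        simp [hardDist_some hn]
    _ ≤ _ := by
        refine sum_le_cqError _ _ _ _ fun e he => ?_
        obtain ⟨W, hW, rfl⟩ := Finset.mem_image.mp he
        exact Set.mem_symmDiff.mpr (Or.inl ⟨hq.2 _ (fits_canonCQ_of_not_sampled hn hs hL
          (Finset.mem_filter.mp hW).2) _ (self_mem_eval_canonCQ (isExample_hardExample hn _)),
          not_target_eval_dual hn _⟩)

lemma iidProb_cqError_le_quarter_le_half (hn : 0 < n) {A : CQAlgorithm}
    (hA : A.ReturnsStronglyMostGeneralFit)
    {N : ℕ} (hN0 : 0 < N) (hN : N < 2 ^ (n - 1)) :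
    iidProb (hardDist n) N {s | cqError (hardDist n) (target n)
      (A schema 1 (labeledOf (target n) s)) ≤ ENNReal.ofReal (1 / 4)} ≤ 2⁻¹ := by
  refine (ENNReal.le_sub_of_add_le_right (PMF.apply_ne_top _ _)
    (iidProb_add_le_one_of_avoid _ hN0 (hardExample n none) _ fun s hs hprod i hi => ?_)).trans_eq
    (by rw [hardDist_none hn, ENNReal.one_sub_inv_two])
  have hs' : ∀ i, ∃ o, s i = hardExample n o := fun i =>
    exists_eq_hardExample_of_mem_support <| (PMF.mem_support_iff _ _).mpr fun h0 =>
      hprod (Finset.prod_eq_zero (Finset.mem_univ i) h0)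
  rw [Set.mem_ofPred_eq, one_div, ENNReal.ofReal_inv_of_pos (by norm_num),
    ENNReal.ofReal_ofNat] at hs
  exact (quarter_lt_cqError hn hA hN hs' ⟨i, hi⟩).not_ge hs

end HardFamily

open HardFamily in
theorem mostGeneral_fitting_not_sample_efficient_PAC_general
    (A : CQAlgorithm)
    (hmg : ∀ (S : Schema) (k : ℕ) (E : LabeledExamples S k),
      (∃ q : CQ S k, IsStronglyMostGeneralFit q E) →
      IsStronglyMostGeneralFit (A S k E) E) :
    ¬ IsSampleEfficientPAC A := by
  rintro ⟨m, hpoly, hPAC⟩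
  obtain ⟨n, hm, hn⟩ :=
    ((hpoly.eventually_lt_two_pow 4 4 6 8 8).and (Filter.eventually_ge_atTop 2)).exists
  have hN : max (m 4 4 6 (8 * n) (8 * n)) 1 < 2 ^ (n - 1) :=
    max_lt hm (Nat.one_lt_two_pow (by omega))
  have hgood := hPAC (1 / 4) (1 / 4) (by norm_num) (by norm_num) (by norm_num) (by norm_num)
    schema 1 (8 * n) (8 * n) (hardDist n)
    (fun e he => by
      obtain ⟨o, rfl⟩ := exists_eq_hardExample_of_mem_support he
      exact ⟨isExample_hardExample (by omega) o, hardExample_ncard_le o⟩)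
    (target n) (layered_facts_ncard_le n) (max (m 4 4 6 (8 * n) (8 * n)) 1)
    (by norm_num [schema_size])
  have hbad := iidProb_cqError_le_quarter_le_half (by omega) hmg (by omega) hN
  have := hgood.trans hbad
  rw [← ENNReal.ofReal_ofNat, ← ENNReal.ofReal_inv_of_pos (by norm_num),
    ENNReal.ofReal_le_ofReal_iff (by norm_num)] at this
  norm_num at this

/-- Any fitting algorithm for CQs that, on every input collection of
labeled examples for which a strongly most-general fitting CQ exists, outputs a strongly
most-general fitting CQ, is not a sample-efficient PAC learning algorithm. -/
theorem mostGeneral_fitting_not_sample_efficient_PAC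
    (A : CQAlgorithm)
    (hfitting : ∀ (S : Schema) (k : ℕ) (E : LabeledExamples S k),
      (∃ q : CQ S k, q.fits E) → (A S k E).fits E)
    (hmg : ∀ (S : Schema) (k : ℕ) (E : LabeledExamples S k),
      (∃ q : CQ S k, IsStronglyMostGeneralFit q E) →
      IsStronglyMostGeneralFit (A S k E) E) :
    ¬ IsSampleEfficientPAC A :=
  mostGeneral_fitting_not_sample_efficient_PAC_general A hmg
end

section
/- Let (I,a0) and (J,b0) be path examples over a common schema. Then there exists a data example (D,d) with |D| ≤ |J|·(|I|+1)² such that the pair ({(I,a0)}, {(D,d)}) is a homomorphism duality relative to (J,b0). -/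
/-! ## Auxiliary machinery for the duality construction -/

section Aux

variable {Sc : Schema}

theorem DBFact.ext' {f g : DBFact Sc} (h1 : f.rel = g.rel) (h2 : f.args = g.args) :
    f = g := by
  cases f; cases g; cases h1; cases h2; rfl

theorem DBFact.map_args {h : ℕ → ℕ} {f : DBFact Sc} : (f.map h).args = f.args.map h := rfl

theorem DBFact.map_rel {h : ℕ → ℕ} {f : DBFact Sc} : (f.map h).rel = f.rel := rfl

theorem PHom.trans' {k : ℕ} {e1 e2 e3 : PInst Sc k} (h12 : PHom e1 e2) (h23 : PHom e2 e3) :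
    PHom e1 e3 := by
  obtain ⟨g, hg, hga⟩ := h12
  obtain ⟨g', hg', hga'⟩ := h23
  refine ⟨g' ∘ g, ?_, fun i => by simp [hga i, hga' i]⟩
  intro f hf
  have := hg' _ (hg f hf)
  simpa [DBFact.map, List.map_map] using this

/-- The finite set of unary "constraint" facts of `I` at path position `p`. -/
noncomputable def Cset (I : Instance Sc) (a : ℕ → ℕ) (p : ℕ) : Finset (DBFact Sc) := by
  classical exact I.finite.toFinset.filter (fun f => f.args = [a p])

theorem mem_Cset {I : Instance Sc} {a : ℕ → ℕ} {p : ℕ} {f : DBFact Sc} :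
    f ∈ Cset I a p ↔ f ∈ I.facts ∧ f.args = [a p] := by
  simp [Cset, Set.Finite.mem_toFinset]

open Classical in
/-- An injective numbering of the constraint facts at position `p`. -/
noncomputable def tagp (I : Instance Sc) (a : ℕ → ℕ) (p : ℕ) (f : DBFact Sc) : ℕ :=
  if h : f ∈ Cset I a p then ((Cset I a p).equivFin ⟨f, h⟩).val else 0

theorem tagp_lt {I : Instance Sc} {a : ℕ → ℕ} {p : ℕ} {f : DBFact Sc}
    (h : f ∈ Cset I a p) : tagp I a p f < (Cset I a p).card := by
  classical
  simp only [tagp, dif_pos h]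
  exact ((Cset I a p).equivFin ⟨f, h⟩).isLt

theorem tagp_inj {I : Instance Sc} {a : ℕ → ℕ} {p : ℕ} {f g : DBFact Sc}
    (hf : f ∈ Cset I a p) (hg : g ∈ Cset I a p)
    (he : tagp I a p f = tagp I a p g) : f = g := by
  classical
  simp only [tagp, dif_pos hf, dif_pos hg] at he
  have := (Cset I a p).equivFin.injective (Fin.val_injective he)
  simpa using congrArg Subtype.val this

/-- Valid node codes at level `p` of the dual instance: `0` = alive, `1` = dead
(with no currently violated constraint), `2 + tagp _ _ p f` = dead, violating the
unary constraint `f` of `I` at position `p`. -/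
def ValidCode (I : Instance Sc) (a : ℕ → ℕ) (n p s : ℕ) : Prop :=
  (s = 0 ∧ p < n) ∨ s = 1 ∨
    (1 ≤ p ∧ p ≤ n ∧ ∃ f ∈ I.facts, f.args = [a p] ∧ s = 2 + tagp I a p f)

/-- The facts of the dual instance. -/
def DFset (I J : Instance Sc) (a b : ℕ → ℕ) (T : ℕ → Sc.Rel) (n m : ℕ) :
    Set (DBFact Sc) :=
  { f | ∃ p s t, 1 ≤ p ∧ p ≤ m ∧ ValidCode I a n (p-1) s ∧ ValidCode I a n p t ∧
        ¬(s = 0 ∧ t = 1) ∧ f.rel = T p ∧ f.args = [Nat.pair (p-1) s, Nat.pair p t] } ∪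
  { f | ∃ p t, 1 ≤ p ∧ p ≤ m ∧ ValidCode I a n p t ∧
        (∃ F ∈ J.facts, F.rel = f.rel ∧ F.args = [b p]) ∧
        (¬ ∃ fI ∈ I.facts, fI.rel = f.rel ∧ fI.args = [a p] ∧ t = 2 + tagp I a p fI) ∧
        f.args = [Nat.pair p t] }

/-- The level of a value of `J` along the path `b`. -/
noncomputable def levOf (b : ℕ → ℕ) (m : ℕ) (u : ℕ) : ℕ :=
  if h : ∃ p, p ≤ m ∧ b p = u then h.choose else 0

theorem levOf_spec {b : ℕ → ℕ} {m : ℕ} (hbinj : Set.InjOn b (Set.Iic m)) {p : ℕ}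
    (hp : p ≤ m) : levOf b m (b p) = p := by
  have h : ∃ q, q ≤ m ∧ b q = b p := ⟨p, hp, rfl⟩
  have h2 := h.choose_spec
  have : h.choose = p := hbinj (Set.mem_Iic.2 h2.1) (Set.mem_Iic.2 hp) h2.2
  simp [levOf, dif_pos h, this]

/-- Walks in an instance mapping homomorphically into a path instance follow the path. -/
theorem walk_levels {J : Instance Sc} {m : ℕ} {b : ℕ → ℕ} {T : ℕ → Sc.Rel}
    (hJ : IsPathInstanceOn J m b T) {E : Instance Sc} {g : ℕ → ℕ}
    (hg : IsHom E J g) {c : ℕ → ℕ} {Rw : ℕ → Sc.Rel}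
    (hc0 : g (c 0) = b 0) {p : ℕ}
    (hstep : ∀ i, 1 ≤ i → i ≤ p → ∃ F ∈ E.facts, F.rel = Rw i ∧ F.args = [c (i-1), c i]) :
    ∀ i, i ≤ p → (i ≤ m ∧ g (c i) = b i ∧ (1 ≤ i → Rw i = T i)) := by
  obtain ⟨hbinj, hJchain, hJchar⟩ := hJ
  intro i
  induction i with
  | zero => intro _; exact ⟨Nat.zero_le m, hc0, by omega⟩
  | succ i ih =>
    intro hip
    obtain ⟨him, hgc, _⟩ := ih (by omega)
    obtain ⟨F, hF, hFrel, hFargs⟩ := hstep (i+1) (by omega) hip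
    have hmem := hg F hF
    simp only [Nat.add_sub_cancel] at hFargs
    rcases hJchar _ hmem with ⟨q, hq1, hqm, hrel, hargs⟩ | ⟨j, _, _, hargs⟩
    · rw [DBFact.map_args, hFargs] at hargs
      simp only [List.map_cons, List.map_nil, List.cons.injEq] at hargs
      obtain ⟨h1, h2, -⟩ := hargs
      have hqi : q - 1 = i := hbinj (Set.mem_Iic.2 (by omega)) (Set.mem_Iic.2 him)
        (by rw [← h1, hgc])
      have hq : q = i + 1 := by omega
      subst hq
      simp only [Nat.add_sub_cancel] at *
      refine ⟨by omega, h2, fun _ => ?_⟩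
      rw [← hrel, DBFact.map_rel, hFrel]
    · rw [DBFact.map_args, hFargs] at hargs
      simp at hargs

theorem code_le {I : Instance Sc} {a : ℕ → ℕ} {n p s : ℕ}
    (h : ValidCode I a n p s) (hch : ∃ f ∈ I.facts, f.args.length = 2) :
    s ≤ I.facts.ncard := by
  classical
  obtain ⟨fc, hfc, hfc2⟩ := hch
  have hN1 : 1 ≤ I.facts.ncard := by
    rw [Nat.one_le_iff_ne_zero, ← Nat.pos_iff_ne_zero]
    exact (Set.ncard_pos I.finite).2 ⟨fc, hfc⟩
  rcases h with ⟨hs, -⟩ | hs | ⟨-, -, f, hf, hfargs, hs⟩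
  · omega
  · omega
  · have hmem : f ∈ Cset I a p := mem_Cset.2 ⟨hf, hfargs⟩
    have h1 := tagp_lt hmem
    have h2 : (Cset I a p).card < I.facts.ncard := by
      rw [Set.ncard_eq_toFinset_card _ I.finite]
      refine Finset.card_lt_card ?_
      refine (Finset.ssubset_iff_of_subset ?_).2 ⟨fc, ?_, ?_⟩
      · intro x hx; exact (Set.Finite.mem_toFinset _).2 (mem_Cset.1 hx).1
      · exact (Set.Finite.mem_toFinset _).2 hfc
      · intro hx
        have := (mem_Cset.1 hx).2
        rw [this] at hfc2
        simp at hfc2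
    omega

/-- The covering map used to bound the number of facts of the dual instance. -/
noncomputable def phif (b : ℕ → ℕ) (m : ℕ) (F : DBFact Sc) (s t : ℕ) : DBFact Sc :=
  ⟨F.rel,
   List.zipWith (fun u c => Nat.pair (levOf b m u) c) F.args
     ([s, t] ++ List.replicate F.args.length 0), by
    rw [List.length_zipWith]
    simp only [List.length_append, List.length_cons, List.length_nil, List.length_replicate]
    rw [min_eq_left (by omega), F.arity_eq]⟩

theorem DFset_card {I J : Instance Sc} {a b : ℕ → ℕ} {T : ℕ → Sc.Rel} {n m : ℕ}
    (hJ : IsPathInstanceOn J m b T) (hch : ∃ f ∈ I.facts, f.args.length = 2) :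
    (DFset I J a b T n m).Finite ∧
      (DFset I J a b T n m).ncard ≤ J.facts.ncard * (I.facts.ncard + 1) ^ 2 := by
  classical
  obtain ⟨hbinj, hJchain, hJchar⟩ := hJ
  set N := I.facts.ncard with hN
  set F0 := J.finite.toFinset with hF0
  set K : Finset (DBFact Sc) := F0.biUnion (fun F =>
    ((Finset.range (N+1)) ×ˢ (Finset.range (N+1))).image
      (fun st => phif b m F st.1 st.2)) with hK
  have hsub : DFset I J a b T n m ⊆ ↑K := by
    rintro f (⟨p, s, t, hp1, hpm, hvs, hvt, -, hrel, hargs⟩ | ⟨p, t, hp1, hpm, hvt, ⟨F, hF, hFrel, hFargs⟩, -, hargs⟩)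
    · obtain ⟨JF, hJF, hJFrel, hJFargs⟩ := hJchain p hp1 hpm
      have heq : f = phif b m JF s t := by
        refine DBFact.ext' ?_ ?_
        · rw [hrel, ← hJFrel]; rfl
        · show f.args = List.zipWith _ JF.args _
          rw [hargs, hJFargs]
          simp only [List.zipWith, List.cons_append, List.nil_append]
          rw [levOf_spec hbinj (by omega), levOf_spec hbinj hpm]
      rw [heq]
      refine Finset.mem_coe.2 (Finset.mem_biUnion.2 ⟨JF, (Set.Finite.mem_toFinset _).2 hJF, ?_⟩)
      refine Finset.mem_image.2 ⟨(s, t), ?_, rfl⟩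
      rw [Finset.mem_product]
      constructor <;> rw [Finset.mem_range] <;>
        [exact Nat.lt_succ_of_le (code_le hvs hch); exact Nat.lt_succ_of_le (code_le hvt hch)]
    · have heq : f = phif b m F t 0 := by
        refine DBFact.ext' ?_ ?_
        · rw [← hFrel]; rfl
        · show f.args = List.zipWith _ F.args _
          rw [hargs, hFargs]
          simp only [List.zipWith, List.cons_append, List.nil_append]
          rw [levOf_spec hbinj hpm]
      rw [heq]
      refine Finset.mem_coe.2 (Finset.mem_biUnion.2 ⟨F, (Set.Finite.mem_toFinset _).2 hF, ?_⟩)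
      refine Finset.mem_image.2 ⟨(t, 0), ?_, rfl⟩
      rw [Finset.mem_product]
      constructor <;> rw [Finset.mem_range]
      · exact Nat.lt_succ_of_le (code_le hvt hch)
      · omega
  refine ⟨Set.Finite.subset K.finite_toSet hsub, ?_⟩
  calc (DFset I J a b T n m).ncard ≤ (↑K : Set (DBFact Sc)).ncard :=
        Set.ncard_le_ncard hsub K.finite_toSet
    _ = K.card := Set.ncard_coe_finset K
    _ ≤ ∑ F ∈ F0, (((Finset.range (N+1)) ×ˢ (Finset.range (N+1))).image
          (fun st => phif b m F st.1 st.2)).card := Finset.card_biUnion_le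
    _ ≤ ∑ _F ∈ F0, (N+1)^2 := by
        refine Finset.sum_le_sum fun F _ => ?_
        calc _ ≤ ((Finset.range (N+1)) ×ˢ (Finset.range (N+1))).card :=
              Finset.card_image_le
          _ = (N+1)^2 := by rw [Finset.card_product, Finset.card_range]; ring
    _ = F0.card * (N+1)^2 := by rw [Finset.sum_const, smul_eq_mul]
    _ = J.facts.ncard * (N+1)^2 := by rw [hF0, ← Set.ncard_eq_toFinset_card _ J.finite]

theorem DF_sound {I J : Instance Sc} {a b : ℕ → ℕ} {R T : ℕ → Sc.Rel} {n m : ℕ}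
    (hIpath : IsPathInstanceOn I n a R) (hJpath : IsPathInstanceOn J m b T)
    (hn : 1 ≤ n) (hnm : n ≤ m) (hRT : ∀ i, 1 ≤ i → i ≤ n → R i = T i)
    {E : Instance Sc} {b' : ℕ} {g : ℕ → ℕ}
    (hg : IsHom E J g) (hgb : g b' = b 0)
    (hnohom : ¬ ∃ f : ℕ → ℕ, IsHom I E f ∧ f (a 0) = b')
    (D : Instance Sc) (hD : D.facts = DFset I J a b T n m) :
    ∃ h : ℕ → ℕ, IsHom E D h ∧ h b' = Nat.pair 0 0 := by
  classical
  obtain ⟨hainj, hIchain, hIchar⟩ := hIpath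
  obtain ⟨hbinj, hJchain, hJchar⟩ := hJpath
  set lev : ℕ → ℕ := fun x => levOf b m (g x) with hlevdef
  have hlev : ∀ {x q}, q ≤ m → g x = b q → lev x = q := by
    intro x q hq hgx
    rw [hlevdef]; simp only []; rw [hgx, levOf_spec hbinj hq]
  -- walks from b' compatible with the path I
  set Walk : ℕ → ℕ → Prop := fun p x => ∃ c : ℕ → ℕ, c 0 = b' ∧ c p = x ∧
    (∀ i, 1 ≤ i → i ≤ p → ∃ F ∈ E.facts, F.rel = R i ∧ F.args = [c (i-1), c i]) ∧
    (∀ j, 1 ≤ j → j ≤ p → ∀ fI ∈ I.facts, fI.args = [a j] →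
       ∃ F ∈ E.facts, F.rel = fI.rel ∧ F.args = [c j]) with hWalkdef
  set Live : ℕ → Prop := fun x => ∃ p, p ≤ n ∧ Walk p x with hLivedef
  have hwalklev : ∀ p x, p ≤ n → Walk p x → g x = b p := by
    rintro p x hpn ⟨c, hc0, hcp, hchain, -⟩
    have := (walk_levels ⟨hbinj, hJchain, hJchar⟩ hg (by rw [hc0, hgb]) hchain p le_rfl).2.1
    rw [hcp] at this; exact this
  -- no full walk exists, else there would be a homomorphism from I
  have hnowalkn : ∀ x, ¬ Walk n x := by
    rintro x ⟨c, hc0, hcp, hchain, hun⟩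
    apply hnohom
    set idx : ℕ → ℕ := fun v => if h : ∃ i, i ≤ n ∧ a i = v then h.choose else 0 with hidxdef
    set f : ℕ → ℕ := fun v => c (idx v) with hfdef
    have hfa : ∀ i, i ≤ n → f (a i) = c i := by
      intro i hi
      have hex : ∃ j, j ≤ n ∧ a j = a i := ⟨i, hi, rfl⟩
      have hspec := hex.choose_spec
      have : hex.choose = i := hainj (Set.mem_Iic.2 hspec.1) (Set.mem_Iic.2 hi) hspec.2
      rw [hfdef, hidxdef]; simp only []; rw [dif_pos hex, this]
    refine ⟨f, ?_, by rw [hfa 0 (by omega), hc0]⟩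
    intro F hF
    rcases hIchar F hF with ⟨i, hi1, hin, hrel, hargs⟩ | ⟨j, hj1, hjn, hargs⟩
    · obtain ⟨F', hF', hF'rel, hF'args⟩ := hchain i hi1 hin
      have : F.map f = F' := by
        refine DBFact.ext' (by rw [DBFact.map_rel, hrel, hF'rel]) ?_
        rw [DBFact.map_args, hargs, hF'args]
        simp only [List.map_cons, List.map_nil]
        rw [hfa (i-1) (by omega), hfa i hin]
      rw [this]; exact hF'
    · obtain ⟨F', hF', hF'rel, hF'args⟩ := hun j hj1 hjn F hF hargs
      have : F.map f = F' := by
        refine DBFact.ext' (by rw [DBFact.map_rel, hF'rel]) ?_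
        rw [DBFact.map_args, hargs, hF'args]
        simp only [List.map_cons, List.map_nil]
        rw [hfa j hjn]
      rw [this]; exact hF'
  have hlive_lt : ∀ x, Live x → lev x < n ∧ Walk (lev x) x := by
    rintro x ⟨p, hpn, hw⟩
    have hpn' : p < n := by
      by_contra h
      have hpe : p = n := by omega
      subst hpe
      exact hnowalkn x hw
    have hgx := hwalklev p x hpn hw
    have : lev x = p := hlev (by omega) hgx
    rw [this]; exact ⟨hpn', hw⟩
  -- violated-constraint predicate
  set VC : ℕ → Prop := fun x => 1 ≤ lev x ∧ lev x ≤ n ∧ ∃ fI ∈ I.facts,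
    fI.args = [a (lev x)] ∧ ¬∃ F ∈ E.facts, F.rel = fI.rel ∧ F.args = [x] with hVCdef
  set code : ℕ → ℕ := fun x =>
    if Live x then 0
    else if hvc : VC x then 2 + tagp I a (lev x) hvc.2.2.choose
    else 1 with hcodedef
  have hcode_live : ∀ x, Live x → code x = 0 := fun x hx => by
    rw [hcodedef]; simp only []; rw [if_pos hx]
  have hcode_zero : ∀ x, code x = 0 → Live x := by
    intro x hx
    by_contra hnl
    rw [hcodedef] at hx; simp only [] at hx
    rw [if_neg hnl] at hx
    split at hx <;> omega
  have hcode_one : ∀ x, code x = 1 → ¬ Live x ∧ ¬ VC x := by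
    intro x hx
    rw [hcodedef] at hx; simp only [] at hx
    constructor
    · intro hl; rw [if_pos hl] at hx; omega
    · intro hv
      by_cases hl : Live x
      · rw [if_pos hl] at hx; omega
      · rw [if_neg hl, dif_pos hv] at hx; omega
  have hvalid : ∀ x, ValidCode I a n (lev x) (code x) := by
    intro x
    by_cases hl : Live x
    · exact Or.inl ⟨hcode_live x hl, (hlive_lt x hl).1⟩
    · by_cases hv : VC x
      · refine Or.inr (Or.inr ⟨hv.1, hv.2.1, hv.2.2.choose, hv.2.2.choose_spec.1,
          hv.2.2.choose_spec.2.1, ?_⟩)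
        rw [hcodedef]; simp only []; rw [if_neg hl, dif_pos hv]
      · refine Or.inr (Or.inl ?_)
        rw [hcodedef]; simp only []; rw [if_neg hl, dif_neg hv]
  -- dichotomy along edges
  have hedge : ∀ x y p, 1 ≤ p → p ≤ m → ∀ F ∈ E.facts, F.rel = T p → F.args = [x, y] →
      Live x → lev x = p - 1 → Live y ∨ VC y := by
    intro x y p hp1 hpm F hF hFrel hFargs hlx hlevx
    obtain ⟨hxlt, cw⟩ := hlive_lt x hlx
    rw [hlevx] at hxlt cw
    have hpn : p ≤ n := by omega
    have hgy : g y = b p := by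
      have hmem := hg F hF
      rcases hJchar _ hmem with ⟨q, hq1, hqm, hrel, hargs⟩ | ⟨j, -, -, hargs⟩
      · rw [DBFact.map_args, hFargs] at hargs
        simp only [List.map_cons, List.map_nil, List.cons.injEq] at hargs
        obtain ⟨h1, h2, -⟩ := hargs
        have hgx : g x = b (p-1) := hwalklev _ x (by omega) cw
        have : q - 1 = p - 1 := hbinj (Set.mem_Iic.2 (by omega)) (Set.mem_Iic.2 (by omega))
          (by rw [← h1, hgx])
        have hq : q = p := by omega
        rw [hq] at h2; exact h2
      · rw [DBFact.map_args, hFargs] at hargs; simp at hargs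
    have hlevy : lev y = p := hlev hpm hgy
    by_cases hly : Live y
    · exact Or.inl hly
    by_cases hvy : VC y
    · exact Or.inr hvy
    exfalso
    apply hly
    rw [hVCdef] at hvy; simp only [] at hvy
    push_neg at hvy
    rw [hlevy] at hvy
    have hallsat : ∀ fI ∈ I.facts, fI.args = [a p] →
        ∃ F' ∈ E.facts, F'.rel = fI.rel ∧ F'.args = [y] := by
      intro fI hfI hfIargs
      exact hvy (by omega) (by omega) fI hfI hfIargs
    obtain ⟨c, hc0, hcp, hchain, hun⟩ := cw
    set c' : ℕ → ℕ := fun i => if i = p then y else c i with hc'def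
    refine ⟨p, hpn, c', ?_, ?_, ?_, ?_⟩
    · rw [hc'def]; simp only []; rw [if_neg (by omega)]; exact hc0
    · rw [hc'def]; simp only []; rw [if_true]
    · intro i hi1 hip
      rcases Nat.lt_or_ge i p with h | h
      · obtain ⟨F', hF', h1, h2⟩ := hchain i hi1 (by omega)
        refine ⟨F', hF', h1, ?_⟩
        rw [hc'def]; simp only []
        rw [if_neg (by omega), if_neg (by omega)]; exact h2
      · have : i = p := by omega
        subst this
        refine ⟨F, hF, by rw [hFrel, hRT i hi1 hpn], ?_⟩
        rw [hc'def]; simp only []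
        rw [if_neg (by omega), if_true, hcp]; exact hFargs
    · intro j hj1 hjp fI hfI hfIargs
      rcases Nat.lt_or_ge j p with h | h
      · obtain ⟨F', hF', h1, h2⟩ := hun j hj1 (by omega) fI hfI hfIargs
        refine ⟨F', hF', h1, ?_⟩
        rw [hc'def]; simp only []; rw [if_neg (by omega)]; exact h2
      · have : j = p := by omega
        subst this
        obtain ⟨F', hF', h1, h2⟩ := hallsat fI hfI hfIargs
        refine ⟨F', hF', h1, ?_⟩
        rw [hc'def]; simp only []; rw [if_true]; exact h2
  -- the homomorphism
  refine ⟨fun x => Nat.pair (lev x) (code x), ?_, ?_⟩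
  · intro F hF
    have hmem := hg F hF
    rw [hD]
    rcases hJchar _ hmem with ⟨p, hp1, hpm, hrel, hargs⟩ | ⟨j, hj1, hjm, hargs⟩
    · -- binary fact
      rw [DBFact.map_args] at hargs
      have hlen : F.args.length = 2 := by
        have := congrArg List.length hargs
        simpa using this
      obtain ⟨x, y, hFargs⟩ : ∃ x y, F.args = [x, y] := List.length_eq_two.1 hlen
      rw [hFargs] at hargs
      simp only [List.map_cons, List.map_nil, List.cons.injEq] at hargs
      obtain ⟨hgx, hgy, -⟩ := hargs
      have hlevx : lev x = p - 1 := hlev (by omega) hgx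
      have hlevy : lev y = p := hlev hpm hgy
      left
      refine ⟨p, code x, code y, hp1, hpm, ?_, ?_, ?_, ?_, ?_⟩
      · rw [← hlevx]; exact hvalid x
      · rw [← hlevy]; exact hvalid y
      · rintro ⟨hcx, hcy⟩
        have hlx := hcode_zero x hcx
        rcases hedge x y p hp1 hpm F hF (by rw [← hrel, DBFact.map_rel]) hFargs hlx hlevx with
          hly | hvy
        · rw [hcode_live y hly] at hcy; omega
        · obtain ⟨h1, h2⟩ := hcode_one y hcy; exact h2 hvy
      · rw [DBFact.map_rel, ← hrel, DBFact.map_rel]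
      · rw [DBFact.map_args, hFargs]
        simp only [List.map_cons, List.map_nil]
        rw [hlevx, hlevy]
    · -- unary fact
      rw [DBFact.map_args] at hargs
      have hlen : F.args.length = 1 := by
        have := congrArg List.length hargs
        simpa using this
      obtain ⟨x, hFargs⟩ : ∃ x, F.args = [x] := List.length_eq_one_iff.1 hlen
      rw [hFargs] at hargs
      simp only [List.map_cons, List.map_nil, List.cons.injEq] at hargs
      obtain ⟨hgx, -⟩ := hargs
      have hlevx : lev x = j := hlev hjm hgx
      right
      refine ⟨j, code x, hj1, hjm, ?_, ?_, ?_, ?_⟩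
      · rw [← hlevx]; exact hvalid x
      · exact ⟨F.map g, hmem, by rw [DBFact.map_rel, DBFact.map_rel],
          by rw [DBFact.map_args, hFargs]; simp only [List.map_cons, List.map_nil]; rw [hgx]⟩
      · rintro ⟨fI, hfI, hfIrel, hfIargs, hcx⟩
        rw [DBFact.map_rel] at hfIrel
        by_cases hl : Live x
        · rw [hcode_live x hl] at hcx; omega
        by_cases hv : VC x
        · have hcxv : code x = 2 + tagp I a (lev x) hv.2.2.choose := by
            rw [hcodedef]; simp only []; rw [if_neg hl, dif_pos hv]
          rw [hcxv] at hcx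
          have hch := hv.2.2.choose_spec
          have hrhs : tagp I a j fI = tagp I a (lev x) fI := by rw [hlevx]
          rw [hrhs] at hcx
          have hfeq : fI = hv.2.2.choose := by
            refine tagp_inj (mem_Cset.2 ⟨hfI, by rw [hlevx]; exact hfIargs⟩)
              (mem_Cset.2 ⟨hch.1, hch.2.1⟩) (by omega)
          apply hch.2.2
          exact ⟨F, hF, by rw [← hfeq, hfIrel], hFargs⟩
        · have : code x = 1 := by
            rw [hcodedef]; simp only []; rw [if_neg hl, dif_neg hv]
          omega
      · rw [DBFact.map_args, hFargs]
        simp only [List.map_cons, List.map_nil]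
        rw [hlevx]
  · have hlive : Live b' := ⟨0, by omega, fun _ => b', rfl, rfl,
      fun i hi1 hi0 => absurd hi0 (by omega), fun j hj1 hj0 => absurd hj0 (by omega)⟩
    show Nat.pair (lev b') (code b') = Nat.pair 0 0
    rw [hcode_live b' hlive, hlev (Nat.zero_le m) hgb]

theorem DF_complete {I J : Instance Sc} {a b : ℕ → ℕ} {R T : ℕ → Sc.Rel} {n m : ℕ}
    (hIpath : IsPathInstanceOn I n a R) (hn : 1 ≤ n)
    {E : Instance Sc} {b' : ℕ}
    {f : ℕ → ℕ} (hf : IsHom I E f) (hfa : f (a 0) = b')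
    {h : ℕ → ℕ} (D : Instance Sc) (hD : D.facts = DFset I J a b T n m)
    (hh : IsHom E D h) (hhb : h b' = Nat.pair 0 0) : False := by
  classical
  obtain ⟨hainj, hIchain, hIchar⟩ := hIpath
  have key : ∀ p, p ≤ n → p < n ∧ h (f (a p)) = Nat.pair p 0 := by
    intro p
    induction p with
    | zero => intro _; exact ⟨by omega, by rw [hfa, hhb]⟩
    | succ p ih =>
      intro hpn
      obtain ⟨hplt, hport⟩ := ih (by omega)
      obtain ⟨F, hF, hFrel, hFargs⟩ := hIchain (p+1) (by omega) hpn
      simp only [Nat.add_sub_cancel] at hFargs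
      have hE : F.map f ∈ E.facts := hf F hF
      have hDm : (F.map f).map h ∈ D.facts := hh _ hE
      rw [hD] at hDm
      have hargsE : ((F.map f).map h).args = [h (f (a p)), h (f (a (p+1)))] := by
        rw [DBFact.map_args, DBFact.map_args, hFargs]; rfl
      rcases hDm with ⟨q, s, t, hq1, hqm, hvs, hvt, hnst, -, hargs2⟩ |
        ⟨q, t, hq1, hqm, hvt, -, -, hargs2⟩
      · rw [hargsE] at hargs2
        simp only [List.cons.injEq, and_true] at hargs2
        obtain ⟨h1, h2⟩ := hargs2
        rw [hport] at h1
        obtain ⟨hq1', hs0⟩ := Nat.pair_eq_pair.1 h1.symm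
        have hq : q = p + 1 := by omega
        subst hq
        have ht1 : t ≠ 1 := fun ht => hnst ⟨hs0, ht⟩
        rcases hvt with ⟨ht0, htn⟩ | ht | ⟨-, -, fI, hfI, hfIargs, ht⟩
        · exact ⟨htn, by rw [h2, ht0]⟩
        · exact absurd ht ht1
        · exfalso
          have hEu : fI.map f ∈ E.facts := hf fI hfI
          have hDu : (fI.map f).map h ∈ D.facts := hh _ hEu
          rw [hD] at hDu
          have hargsU : ((fI.map f).map h).args = [h (f (a (p+1)))] := by
            rw [DBFact.map_args, DBFact.map_args, hfIargs]; rfl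
          rcases hDu with ⟨q', s', t', -, -, -, -, -, -, hargs3⟩ |
            ⟨q', t', -, -, -, -, hnex, hargs3⟩
          · rw [hargsU] at hargs3; simp at hargs3
          · rw [hargsU] at hargs3
            simp only [List.cons.injEq, and_true] at hargs3
            rw [h2] at hargs3
            obtain ⟨hq', ht'⟩ := Nat.pair_eq_pair.1 hargs3
            apply hnex
            refine ⟨fI, hfI, ?_, ?_, ?_⟩
            · rw [DBFact.map_rel, DBFact.map_rel]
            · rw [← hq']; exact hfIargs
            · rw [← hq']; omega
      · rw [hargsE] at hargs2; simp at hargs2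
  exact absurd (key n le_rfl).1 (by omega)

end Aux

/-- For path examples `(I, a₀)` and `(J, b₀)` over a common schema,
there is a data example `(D, d)` with `|D| ≤ |J| · (|I| + 1)²` such that
`({(I,a₀)}, {(D,d)})` is a homomorphism duality relative to `(J, b₀)`. -/
theorem path_examples_have_polynomial_duality
    {S : Schema} (I J : Instance S) (a0 b0 : ℕ)
    (hI : IsPathExample (I, fun _ : Fin 1 => a0))
    (hJ : IsPathExample (J, fun _ : Fin 1 => b0)) :
    ∃ (D : Instance S) (d : ℕ),
      D.facts.ncard ≤ J.facts.ncard * (I.facts.ncard + 1) ^ 2 ∧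
      IsHomDualityRel (J, fun _ : Fin 1 => b0)
        {(I, fun _ : Fin 1 => a0)} {(D, fun _ : Fin 1 => d)} := by
  classical
  obtain ⟨n, a, R, hIpath, ha0⟩ := hI
  obtain ⟨m, b, T, hJpath, hb0⟩ := hJ
  rcases Nat.eq_zero_or_pos n with hn0 | hn
  · -- degenerate case: I has no facts, so (I,a0) maps into everything
    subst hn0
    have hIempty : ∀ F, F ∉ I.facts := by
      intro F hF
      rcases hIpath.2.2 F hF with ⟨i, hi1, hin, -, -⟩ | ⟨j, hj1, hjn, -⟩ <;> omega
    refine ⟨⟨∅, Set.finite_empty⟩, 0, by simp, ?_⟩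
    intro e' hval hhom
    simp only [Set.mem_singleton_iff, exists_eq_left, forall_eq]
    have hL : PHom (I, fun _ : Fin 1 => a0) e' := by
      refine ⟨fun _ => e'.2 0, ?_, ?_⟩
      · intro F hF; exact absurd hF (hIempty F)
      · intro i; rw [Subsingleton.elim i (0 : Fin 1)]
    have hR : ¬ PHom e' (⟨⟨∅, Set.finite_empty⟩, fun _ : Fin 1 => 0⟩ : PInst S 1) := by
      rintro ⟨h, hh, -⟩
      obtain ⟨F, hF, -⟩ := hval 0
      exact absurd (hh F hF) (Set.notMem_empty _)
    exact iff_of_true hL hR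
  · by_cases hIJ : PHom (I, fun _ : Fin 1 => a0) (J, fun _ : Fin 1 => b0)
    · -- main case
      obtain ⟨g0, hg0, hg0a⟩ := hIJ
      have hg0a0 : g0 (a 0) = b 0 := by
        have := hg0a 0
        simp only [] at this ha0 hb0
        rw [← ha0, ← hb0]; exact this
      have hWL := walk_levels hJpath hg0 hg0a0 (p := n) hIpath.2.1
      have hnm : n ≤ m := (hWL n le_rfl).1
      have hRT : ∀ i, 1 ≤ i → i ≤ n → R i = T i := fun i h1 h2 => (hWL i h2).2.2 h1
      have hch : ∃ f ∈ I.facts, f.args.length = 2 := by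
        obtain ⟨F, hF, -, hargs⟩ := hIpath.2.1 1 le_rfl hn
        exact ⟨F, hF, by rw [hargs]; rfl⟩
      obtain ⟨hfin, hcard⟩ := DFset_card (I := I) (a := a) (n := n) hJpath hch
      refine ⟨⟨DFset I J a b T n m, hfin⟩, Nat.pair 0 0, hcard, ?_⟩
      intro e' hval hhom
      simp only [Set.mem_singleton_iff, exists_eq_left, forall_eq]
      obtain ⟨g, hg, hgb⟩ := hhom
      have hgb0 : g (e'.2 0) = b 0 := by
        have := hgb 0
        simp only [] at this hb0
        rw [← hb0]; exact this
      constructor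
      · rintro ⟨f, hf, hfa⟩ ⟨h, hh, hhb⟩
        have hfa0 : f (a 0) = e'.2 0 := by
          have := hfa 0
          simp only [] at this ha0
          rw [← ha0]; exact this
        exact DF_complete hIpath hn hf hfa0 ⟨DFset I J a b T n m, hfin⟩ rfl hh (hhb 0)
      · intro hR
        by_contra hnl
        apply hR
        have hnohom : ¬ ∃ f : ℕ → ℕ, IsHom I e'.1 f ∧ f (a 0) = e'.2 0 := by
          rintro ⟨f, hf, hfa⟩
          refine hnl ⟨f, hf, fun i => ?_⟩
          rw [Subsingleton.elim i (0 : Fin 1)]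
          simp only [] at ha0 ⊢
          rw [ha0]; exact hfa
        obtain ⟨h, hh, hhb⟩ := DF_sound hIpath hJpath hn hnm hRT hg hgb0 hnohom
          ⟨DFset I J a b T n m, hfin⟩ rfl
        exact ⟨h, hh, fun i => by rw [Subsingleton.elim i (0 : Fin 1)]; exact hhb⟩
    · -- (I,a0) does not map into (J,b0): J itself is a dual
      refine ⟨J, b0, Nat.le_mul_of_pos_right _ (by positivity), ?_⟩
      intro e' hval hhom
      simp only [Set.mem_singleton_iff, exists_eq_left, forall_eq]
      constructor
      · intro hL
        exact absurd (PHom.trans' hL hhom) hIJ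
      · intro hR
        exact absurd hhom hR
end

section
/- If a finite set of CQs B is a basis of most-general fitting CQs for a collection of labeled examples E and B is subset-minimal among such bases, then every element of B is a weakly most-general fitting CQ for E. -/
section

variable {S : Schema} {k : ℕ}

theorem CQ.contained.trans {q₁ q₂ q₃ : CQ S k}
    (h₁₂ : q₁.contained q₂) (h₂₃ : q₂.contained q₃) : q₁.contained q₃ :=
  fun I => (h₁₂ I).trans (h₂₃ I)

namespace IsBasisOfMostGeneralFits

variable {B : Set (CQ S k)} {E : LabeledExamples S k}

theorem diff_singleton_of_contained (hB : IsBasisOfMostGeneralFits B E)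
    {q p : CQ S k} (hp : p ∈ B) (hpq : p ≠ q) (hqp : q.contained p) :
    IsBasisOfMostGeneralFits (B \ {q}) E := by
  obtain ⟨hfin, hfits, hcover⟩ := hB
  refine ⟨hfin.sdiff, fun r hr => hfits r hr.1, fun q' hq' => ?_⟩
  obtain ⟨r, hrB, hq'r⟩ := hcover q' hq'
  by_cases hrq : r = q
  · exact ⟨p, ⟨hp, hpq⟩, hq'r.trans (hrq ▸ hqp)⟩
  · exact ⟨r, ⟨hrB, hrq⟩, hq'r⟩

theorem eq_of_contained_of_minimal (hB : IsBasisOfMostGeneralFits B E)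
    (hmin : ∀ B' ⊆ B, IsBasisOfMostGeneralFits B' E → B' = B)
    {q p : CQ S k} (hq : q ∈ B) (hp : p ∈ B) (hqp : q.contained p) : p = q := by
  by_contra hpq
  have hB' : B \ {q} = B :=
    hmin _ Set.sdiff_subset (hB.diff_singleton_of_contained hp hpq hqp)
  exact (hB'.symm ▸ hq : q ∈ B \ {q}).2 rfl

end IsBasisOfMostGeneralFits

end

/-- If `B` is a basis of most-general fitting CQs for `E` that is
subset-minimal among such bases, then every element of `B` is a weakly most-general
fitting CQ for `E`. -/
theorem minimal_basis_elements_weakly_most_general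
    {S : Schema} {k : ℕ} (B : Set (CQ S k)) (E : LabeledExamples S k)
    (hB : IsBasisOfMostGeneralFits B E)
    (hmin : ∀ B' ⊆ B, IsBasisOfMostGeneralFits B' E → B' = B) :
    ∀ q ∈ B, IsWeaklyMostGeneralFit q E := by
  intro q hq
  refine ⟨hB.2.1 q hq, fun q' hq' hqq' => ⟨hqq', ?_⟩⟩
  obtain ⟨p, hp, hq'p⟩ := hB.2.2 q' hq'
  obtain rfl : p = q := hB.eq_of_contained_of_minimal hmin hq hp (hqq'.trans hq'p)
  exact hq'p
end

section
/- Let n be a positive integer and fix a schema containing a unary relation symbol A and a binary relation symbol R. For a subset S of {1,…,n}, let I_S be the path instance {R(b0,b1),…,R(b_{n−1},b_n)} ∪ {A(b_i) | i ∈ S}. Then for all distinct subsets S, S' of {1,…,n} of equal cardinality, there is no homomorphism from I_{S'} to I_S mapping b0 to b0, i.e., (I_{S'},b0) ↛ (I_S,b0). -/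
/-- The path instance `I_T = {R(b₀,b₁), …, R(b_{n-1}, b_n)} ∪ {A(b_i) ∣ i ∈ T}`. -/
def pathInst (S : Schema) (A R : S.Rel) (hA : S.arity A = 1) (hR : S.arity R = 2)
    (b : ℕ → ℕ) (n : ℕ) (T : Finset ℕ) : Instance S where
  facts := ((fun i => (⟨R, [b (i - 1), b i], by simp [hR]⟩ : DBFact S)) '' Set.Icc 1 n) ∪
           ((fun j => (⟨A, [b j], by simp [hA]⟩ : DBFact S)) '' (T : Set ℕ))
  finite := ((Set.finite_Icc 1 n).image _).union (T.finite_toSet.image _)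

/-- Fix a schema with a unary relation symbol `A` and a binary relation
symbol `R`, a positive integer `n`, and pairwise distinct values `b 0, …, b n`. For all
distinct subsets `T, T'` of `{1, …, n}` of equal cardinality there is no homomorphism
from `I_{T'}` to `I_T` mapping `b 0` to `b 0`. -/
theorem distinct_label_sets_no_hom
    (S : Schema) (A R : S.Rel) (hA : S.arity A = 1) (hR : S.arity R = 2)
    (n : ℕ) (hn : 0 < n) (b : ℕ → ℕ) (hb : Set.InjOn b (Set.Iic n))
    (T T' : Finset ℕ) (hT : ↑T ⊆ Set.Icc 1 n) (hT' : ↑T' ⊆ Set.Icc 1 n)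
    (hcard : T.card = T'.card) (hne : T ≠ T') :
    ¬ PHom (pathInst S A R hA hR b n T', fun _ : Fin 1 => b 0)
           (pathInst S A R hA hR b n T, fun _ : Fin 1 => b 0) := by
  rintro ⟨h, hhom, hpt⟩
  have hAR : A ≠ R := fun e => by rw [e, hR] at hA; omega
  have key : ∀ i, i ≤ n → h (b i) = b i := by
    intro i
    induction i with
    | zero => intro _; exact hpt 0
    | succ i ih =>
      intro hin
      have hile : i ≤ n := by omega
      have hiI : (⟨R, [b i, b (i+1)], by simp [hR]⟩ : DBFact S)
          ∈ (pathInst S A R hA hR b n T').facts := by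
        left
        exact ⟨i+1, ⟨by omega, hin⟩, by simp⟩
      have hmem := hhom _ hiI
      rcases hmem with hcase | hcase
      · obtain ⟨j, hj, hje⟩ := hcase
        simp only [Set.mem_Icc] at hj
        simp only [DBFact.map, List.map, DBFact.mk.injEq, List.cons.injEq, and_true] at hje
        obtain ⟨-, h1, h2⟩ := hje
        have hji : j - 1 = i := hb (by simp; omega) (by simp [hile]) (by rw [h1, ih hile])
        have : j = i + 1 := by omega
        rw [← h2, this]
      · obtain ⟨j, hj, hje⟩ := hcase
        exact absurd (congrArg DBFact.rel hje) (by simp [DBFact.map]; exact hAR)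
  have hsub : T' ⊆ T := by
    intro j hjT'
    have hjn : j ∈ Set.Icc 1 n := hT' hjT'
    simp only [Set.mem_Icc] at hjn
    have hjI : (⟨A, [b j], by simp [hA]⟩ : DBFact S)
        ∈ (pathInst S A R hA hR b n T').facts := by
      right
      exact ⟨j, hjT', rfl⟩
    have hmem := hhom _ hjI
    rcases hmem with hcase | hcase
    · obtain ⟨j', hj', hje⟩ := hcase
      exact absurd (congrArg DBFact.rel hje) (by simp [DBFact.map]; exact fun e => hAR e.symm)
    · obtain ⟨j', hj', hje⟩ := hcase
      simp only [DBFact.map, List.map, DBFact.mk.injEq, List.cons.injEq, and_true] at hje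
      have hj'n : j' ∈ Set.Icc 1 n := hT hj'
      simp only [Set.mem_Icc] at hj'n
      have : b j' = b j := by rw [hje.2, key j hjn.2]
      have : j' = j := hb (by simp [hj'n.2]) (by simp [hjn.2]) this
      rwa [← this]
  exact hne (Finset.eq_of_subset_of_card_le hsub (le_of_eq hcard)).symm
end

section
/- Every weakly most-specific fitting CQ is a most-specific fitting CQ: if a CQ q fits a collection of labeled examples E = (E+,E−) with E+ finite and nonempty, and every CQ q' that fits E with q' ⊆ q satisfies q ≡ q', then q ⊆ q' for every CQ q' that fits E. -/
namespace WMSAux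

variable {S : Schema} {k : ℕ}

/-- Generating relation on answer-variable indices. -/
def idxRel (q q' : CQ S k) (i j : Fin k) : Prop :=
  q.ans i = q.ans j ∨ q'.ans i = q'.ans j

/-- Equivalence generated by `idxRel`. -/
def idxEq (q q' : CQ S k) : Fin k → Fin k → Prop :=
  Relation.EqvGen (idxRel q q')

lemma idxEq_invariant {q q' : CQ S k} {α : Sort*} {f : Fin k → α}
    (hf : ∀ i j, idxRel q q' i j → f i = f j) {i j : Fin k}
    (h : idxEq q q' i j) : f i = f j := by
  induction h with
  | rel a b hab => exact hf a b hab
  | refl => rfl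
  | symm a b _ ih => exact ih.symm
  | trans a b c _ _ ih1 ih2 => exact ih1.trans ih2

/-- Canonical class label of an index. -/
noncomputable def cls (q q' : CQ S k) (i : Fin k) : ℕ :=
  @Nat.find (fun n => ∃ j : Fin k, idxEq q q' j i ∧ j.val = n) (Classical.decPred _)
    ⟨i.val, i, Relation.EqvGen.refl _, rfl⟩

lemma cls_spec (q q' : CQ S k) (i : Fin k) :
    ∃ j : Fin k, idxEq q q' j i ∧ j.val = cls q q' i :=
  @Nat.find_spec (fun n => ∃ j : Fin k, idxEq q q' j i ∧ j.val = n) (Classical.decPred _)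
    ⟨i.val, i, Relation.EqvGen.refl _, rfl⟩

lemma cls_eq_of {q q' : CQ S k} {i j : Fin k} (h : idxEq q q' i j) :
    cls q q' i = cls q q' j := by
  unfold cls
  congr 1
  · funext n
    apply propext
    constructor
    · rintro ⟨j', hj', rfl⟩; exact ⟨j', hj'.trans _ _ _ h, rfl⟩
    · rintro ⟨j', hj', rfl⟩
      exact ⟨j', hj'.trans _ _ _ (Relation.EqvGen.symm _ _ h), rfl⟩

lemma idxEq_of_cls_eq {q q' : CQ S k} {i j : Fin k} (h : cls q q' i = cls q q' j) :
    idxEq q q' i j := by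
  obtain ⟨j1, hj1, hv1⟩ := cls_spec q q' i
  obtain ⟨j2, hj2, hv2⟩ := cls_spec q q' j
  have : j1 = j2 := Fin.ext (by rw [hv1, hv2, h])
  subst this
  exact (Relation.EqvGen.symm _ _ hj1).trans _ _ _ hj2

/-- Renaming for variables of `q`. -/
noncomputable def rho0 (q q' : CQ S k) (x : ℕ) : ℕ :=
  if h : ∃ i, q.ans i = x then Nat.pair 2 (cls q q' h.choose) else Nat.pair 0 x

/-- Renaming for variables of `q'`. -/
noncomputable def rho1 (q q' : CQ S k) (x : ℕ) : ℕ :=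
  if h : ∃ i, q'.ans i = x then Nat.pair 2 (cls q q' h.choose) else Nat.pair 1 x

lemma rho0_ans (q q' : CQ S k) (i : Fin k) :
    rho0 q q' (q.ans i) = Nat.pair 2 (cls q q' i) := by
  have h : ∃ j, q.ans j = q.ans i := ⟨i, rfl⟩
  rw [rho0, dif_pos h]
  congr 1
  exact cls_eq_of (Relation.EqvGen.rel _ _ (Or.inl h.choose_spec))

lemma rho1_ans (q q' : CQ S k) (i : Fin k) :
    rho1 q q' (q'.ans i) = Nat.pair 2 (cls q q' i) := by
  have h : ∃ j, q'.ans j = q'.ans i := ⟨i, rfl⟩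
  rw [rho1, dif_pos h]
  congr 1
  exact cls_eq_of (Relation.EqvGen.rel _ _ (Or.inr h.choose_spec))

lemma DBFact.map_map (g h : ℕ → ℕ) (f : DBFact S) :
    (f.map g).map h = f.map (h ∘ g) := by
  cases f
  simp [DBFact.map, List.map_map]

/-- The conjunction of two CQs, with answer variables identified. -/
noncomputable def conj (q q' : CQ S k) : CQ S k where
  atoms := (DBFact.map (rho0 q q') '' q.atoms) ∪ (DBFact.map (rho1 q q') '' q'.atoms)
  finite := (q.finite.image _).union (q'.finite.image _)
  ans := fun i => Nat.pair 2 (cls q q' i)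

lemma conj_le_left (q q' : CQ S k) : (conj q q').contained q := by
  rintro I a ⟨hadom, H, hat, hans⟩
  refine ⟨hadom, H ∘ rho0 q q', fun f hf => ?_, fun i => ?_⟩
  · rw [← DBFact.map_map]
    exact hat _ (Or.inl ⟨f, hf, rfl⟩)
  · show H (rho0 q q' (q.ans i)) = a i
    rw [rho0_ans]
    exact hans i

lemma conj_le_right (q q' : CQ S k) : (conj q q').contained q' := by
  rintro I a ⟨hadom, H, hat, hans⟩
  refine ⟨hadom, H ∘ rho1 q q', fun f hf => ?_, fun i => ?_⟩
  · rw [← DBFact.map_map]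
    exact hat _ (Or.inr ⟨f, hf, rfl⟩)
  · show H (rho1 q q' (q'.ans i)) = a i
    rw [rho1_ans]
    exact hans i

lemma conj_fits (q q' : CQ S k) (E : LabeledExamples S k)
    (hq : q.fits E) (hq' : q'.fits E) : (conj q q').fits E := by
  constructor
  · intro e he
    obtain ⟨hadom, h, hat, hans⟩ := hq.1 e he
    obtain ⟨_, h', hat', hans'⟩ := hq'.1 e he
    -- values agree on an equivalence class
    have key : ∀ i j : Fin k, idxEq q q' i j → e.2 i = e.2 j := by
      intro i j hij
      refine idxEq_invariant (f := e.2) ?_ hij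
      rintro a b (hab | hab)
      · rw [← hans a, ← hans b, hab]
      · rw [← hans' a, ← hans' b, hab]
    classical
    set H : ℕ → ℕ := fun n =>
      if hm : ∃ i : Fin k, Nat.pair 2 (cls q q' i) = n then e.2 hm.choose
      else if n.unpair.1 = 0 then h n.unpair.2 else h' n.unpair.2 with hH
    have H_cls : ∀ i : Fin k, H (Nat.pair 2 (cls q q' i)) = e.2 i := by
      intro i
      have hm : ∃ j : Fin k, Nat.pair 2 (cls q q' j) = Nat.pair 2 (cls q q' i) := ⟨i, rfl⟩
      rw [hH]
      simp only [dif_pos hm]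
      have h1 : cls q q' hm.choose = cls q q' i := by
        have := hm.choose_spec
        have := congrArg (fun n => n.unpair.2) this
        simpa using this
      exact key _ _ (idxEq_of_cls_eq h1)
    have H_rho0 : ∀ x, H (rho0 q q' x) = h x := by
      intro x
      by_cases hx : ∃ i, q.ans i = x
      · obtain ⟨i, hi⟩ := hx
        subst hi
        rw [rho0_ans, H_cls, hans]
      · rw [rho0, dif_neg hx, hH]
        have hm : ¬ ∃ i : Fin k, Nat.pair 2 (cls q q' i) = Nat.pair 0 x := by
          rintro ⟨i, hi⟩
          have := congrArg (fun n => n.unpair.1) hi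
          simpa using this
        simp [dif_neg hm]
    have H_rho1 : ∀ x, H (rho1 q q' x) = h' x := by
      intro x
      by_cases hx : ∃ i, q'.ans i = x
      · obtain ⟨i, hi⟩ := hx
        subst hi
        rw [rho1_ans, H_cls, hans']
      · rw [rho1, dif_neg hx, hH]
        have hm : ¬ ∃ i : Fin k, Nat.pair 2 (cls q q' i) = Nat.pair 1 x := by
          rintro ⟨i, hi⟩
          have := congrArg (fun n => n.unpair.1) hi
          simpa using this
        simp [dif_neg hm]
    refine ⟨hadom, H, ?_, fun i => H_cls i⟩
    rintro f (⟨g, hg, rfl⟩ | ⟨g, hg, rfl⟩)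
    · rw [DBFact.map_map]
      have : H ∘ rho0 q q' = h := funext H_rho0
      rw [this]
      exact hat g hg
    · rw [DBFact.map_map]
      have : H ∘ rho1 q q' = h' := funext H_rho1
      rw [this]
      exact hat' g hg
  · intro e he hcontra
    exact hq.2 e he (conj_le_left q q' e.1 hcontra)

end WMSAux

/-- Every weakly most-specific fitting CQ is a most-specific fitting
CQ: if `q` fits a collection of labeled examples `E` whose set of positive examples is
finite and nonempty, and every CQ `q'` that fits `E` with `q' ⊆ q` satisfies `q ≡ q'`,
then `q ⊆ q'` for every CQ `q'` that fits `E`. -/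
theorem weakly_most_specific_is_most_specific
    {S : Schema} {k : ℕ} (q : CQ S k) (E : LabeledExamples S k)
    (hposfin : E.pos.Finite) (hposne : E.pos.Nonempty)
    (hfits : q.fits E)
    (hweak : ∀ q' : CQ S k, q'.fits E → q'.contained q → q.equiv q') :
    ∀ q' : CQ S k, q'.fits E → q.contained q' := by
  intro q' hq'
  have hconjfits := WMSAux.conj_fits q q' E hfits hq'
  have hequiv := hweak (WMSAux.conj q q') hconjfits (WMSAux.conj_le_left q q')
  intro I a ha
  exact WMSAux.conj_le_right q q' I (hequiv.1 I ha)
end
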